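/- arXiv:2503.08448 — 4 statements merged into one kernel-verified Lean document; each statement's English description precedes it below -/
import Mathlib

section
/- Let n ≥ 3 be an integer, 0 < m < (n-2)/n, γ > 0 with γ ≠ 2/(1-m) and η > 0. Let α ∈ ℝ and β ≠ 0 satisfy α = (2β − 1)/(1-m). If there exists a radially symmetric solution f of Δ(f^m/m) + αf + βx·∇f = 0, f > 0, in ℝ^n \ {0} satisfying lim_{r→0⁺} r^γ f(r) = η, then α < 0 and β < 0. -/
open Set Filter Real Topology

lemma cmp_mono {φ ψ dφ dψ : ℝ → ℝ} {a b : ℝ} (hab : a ≤ b)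
    (hφ : ∀ s ∈ Icc a b, HasDerivAt φ (dφ s) s)
    (hψ : ∀ s ∈ Icc a b, HasDerivAt ψ (dψ s) s)
    (hle : ∀ s ∈ Ioo a b, dφ s ≤ dψ s) :
    φ b - φ a ≤ ψ b - ψ a := by
  have key : MonotoneOn (fun s => ψ s - φ s) (Icc a b) := by
    apply monotoneOn_of_deriv_nonneg (convex_Icc a b)
    · exact ContinuousOn.sub (fun s hs => (hψ s hs).continuousAt.continuousWithinAt)
        (fun s hs => (hφ s hs).continuousAt.continuousWithinAt)
    · intro s hs
      rw [interior_Icc] at hs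
      exact ((hψ s (Ioo_subset_Icc_self hs)).sub
        (hφ s (Ioo_subset_Icc_self hs))).differentiableAt.differentiableWithinAt
    · intro s hs
      rw [interior_Icc] at hs
      rw [HasDerivAt.deriv (f := fun s => ψ s - φ s) ((hψ s (Ioo_subset_Icc_self hs)).sub (hφ s (Ioo_subset_Icc_self hs)))]
      exact sub_nonneg.2 (hle s hs)
  have := key (left_mem_Icc.2 hab) (right_mem_Icc.2 hab) hab
  simp only at this
  linarith

lemma hasDerivAt_prim (C p : ℝ) (hp : p ≠ -1) {s : ℝ} (hs : 0 < s) :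
    HasDerivAt (fun x : ℝ => C / (p+1) * x ^ (p+1)) (C * s ^ p) s := by
  have h := (Real.hasDerivAt_rpow_const (x := s) (p := p+1) (Or.inl hs.ne')).const_mul (C / (p+1))
  have hp1 : p + 1 ≠ 0 := by intro h0; apply hp; linarith
  have : C / (p + 1) * ((p + 1) * s ^ (p + 1 - 1)) = C * s ^ p := by
    rw [add_sub_cancel_right]; field_simp
  rwa [this] at h

lemma deriv_upper {φ dφ : ℝ → ℝ} {C p a b : ℝ} (hp : p ≠ -1) (ha : 0 < a) (hab : a ≤ b)
    (hφ : ∀ s ∈ Icc a b, HasDerivAt φ (dφ s) s)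
    (hle : ∀ s ∈ Ioo a b, dφ s ≤ C * s ^ p) :
    φ b - φ a ≤ C / (p+1) * b ^ (p+1) - C / (p+1) * a ^ (p+1) :=
  cmp_mono hab hφ (fun s hs => hasDerivAt_prim C p hp (lt_of_lt_of_le ha hs.1)) hle

lemma deriv_lower {φ dφ : ℝ → ℝ} {C p a b : ℝ} (hp : p ≠ -1) (ha : 0 < a) (hab : a ≤ b)
    (hφ : ∀ s ∈ Icc a b, HasDerivAt φ (dφ s) s)
    (hle : ∀ s ∈ Ioo a b, C * s ^ p ≤ dφ s) :
    C / (p+1) * b ^ (p+1) - C / (p+1) * a ^ (p+1) ≤ φ b - φ a :=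
  cmp_mono hab (fun s hs => hasDerivAt_prim C p hp (lt_of_lt_of_le ha hs.1)) hφ hle

lemma deriv_lower_log {φ dφ : ℝ → ℝ} {C a b : ℝ} (ha : 0 < a) (hab : a ≤ b)
    (hφ : ∀ s ∈ Icc a b, HasDerivAt φ (dφ s) s)
    (hle : ∀ s ∈ Ioo a b, C * s⁻¹ ≤ dφ s) :
    C * Real.log b - C * Real.log a ≤ φ b - φ a :=
  cmp_mono hab
    (fun s hs => ((Real.hasDerivAt_log (lt_of_lt_of_le ha hs.1).ne').const_mul C))
    hφ hle

lemma tendsto_rpow_zero' {p : ℝ} (hp : 0 < p) :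
    Tendsto (fun r : ℝ => r ^ p) (𝓝[>] (0:ℝ)) (𝓝 0) := by
  have := (Real.continuousAt_rpow_const 0 p (Or.inr hp.le)).tendsto
  rw [Real.zero_rpow hp.ne'] at this
  exact this.mono_left nhdsWithin_le_nhds

lemma tendsto_rpow_neg_top' {p : ℝ} (hp : p < 0) :
    Tendsto (fun r : ℝ => r ^ p) (𝓝[>] (0:ℝ)) atTop := by
  have h1 : Tendsto (fun r : ℝ => r ^ (-p)) (𝓝[>] (0:ℝ)) (𝓝[>] 0) := by
    rw [tendsto_nhdsWithin_iff]
    exact ⟨tendsto_rpow_zero' (by linarith),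
      eventually_nhdsWithin_of_forall fun r hr => Real.rpow_pos_of_pos hr _⟩
  have h2 := tendsto_inv_nhdsGT_zero.comp h1
  apply h2.congr'
  filter_upwards [self_mem_nhdsWithin] with r (hr : 0 < r)
  simp [Function.comp, ← Real.rpow_neg hr.le]

lemma ev_Ioo {Q : ℝ → Prop} (h : ∀ᶠ r in 𝓝[>](0:ℝ), Q r) :
    ∃ δ > (0:ℝ), ∀ r ∈ Ioo (0:ℝ) δ, Q r := by
  rw [eventually_nhdsWithin_iff, Metric.eventually_nhds_iff] at h
  obtain ⟨ε, hε, hQ⟩ := h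
  exact ⟨ε, hε, fun r hr => hQ (by rw [Real.dist_eq, sub_zero, abs_of_pos hr.1]; exact hr.2) hr.1⟩

lemma lemA {w dw : ℝ → ℝ} {μ P q c δ : ℝ} (hδ : 0 < δ)
    (hμ : 0 < μ) (hP : 0 < P)
    (hwpos : ∀ r ∈ Ioo (0:ℝ) δ, 0 < w r)
    (hwd : ∀ r ∈ Ioo (0:ℝ) δ, HasDerivAt w (dw r) r)
    (hwlim : Tendsto (fun r => r ^ μ * w r) (𝓝[>] (0:ℝ)) (𝓝 P))
    (hdw : Tendsto (fun r => r ^ (q-1) * dw r) (𝓝[>] (0:ℝ)) (𝓝 c))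
    (hμq : μ ≠ q - 2) (hc : μ < q - 2 → c ≠ 0) : False := by
  rcases lt_or_gt_of_ne hμq with hlt | hgt
  · -- μ < q - 2, hence 2 < q
    have hq2 : 2 < q := by linarith
    have hq1 : (1:ℝ) - q ≠ -1 := by intro h; rw [sub_eq_iff_eq_add] at h; norm_num at h; linarith
    rcases (hc hlt).lt_or_gt with hcneg | hcpos
    · -- c < 0
      obtain ⟨δ₁, hδ₁, hb⟩ := ev_Ioo (hdw.eventually (eventually_le_nhds (by linarith : c < c/2)))
      set ρ := min δ₁ δ / 2 with hρdef
      have hρ : 0 < ρ := by positivity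
      have hρδ₁ : ρ < δ₁ := by
        have h1 := min_le_left δ₁ δ; have h2 := min_le_right δ₁ δ
        have : 0 < min δ₁ δ := lt_min hδ₁ hδ
        rw [hρdef]; linarith
      have hρδ : ρ < δ := by
        have h2 := min_le_right δ₁ δ
        have : 0 < min δ₁ δ := lt_min hδ₁ hδ
        rw [hρdef]; linarith
      have hwρ : 0 < w ρ := hwpos ρ ⟨hρ, hρδ⟩
      set K := (c/2)/(2-q) with hKdef
      have hK : 0 < K := div_pos_of_neg_of_neg (by linarith) (by linarith)
      -- lower bound for w on (0, ρ)
      have key : ∀ r ∈ Ioo (0:ℝ) ρ, K * r ^ (2-q) - K * ρ ^ (2-q) ≤ w r := by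
        intro r hr
        have hup := deriv_upper (C := c/2) (p := 1-q) hq1 hr.1 hr.2.le
          (fun s hs => hwd s ⟨lt_of_lt_of_le hr.1 hs.1, lt_of_le_of_lt hs.2 hρδ⟩)
          (fun s hs => by
            have hs0 : 0 < s := lt_trans hr.1 hs.1
            have hbs := hb s ⟨hs0, lt_trans hs.2 hρδ₁⟩
            have hpow : (0:ℝ) < s ^ (q-1) := Real.rpow_pos_of_pos hs0 _
            have : dw s ≤ (c/2) / s ^ (q-1) := by
              rw [le_div_iff₀ hpow]; linarith [hbs]
            calc dw s ≤ (c/2) / s ^ (q-1) := this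
              _ = (c/2) * s ^ (1-q) := by
                  rw [show (1:ℝ)-q = -(q-1) from by ring, Real.rpow_neg hs0.le]; ring
          )
        have e : (1:ℝ) - q + 1 = 2 - q := by ring
        rw [e] at hup
        -- hup : w ρ - w r ≤ K * ρ^(2-q) - K * r^(2-q)
        linarith [hup]
      -- now derive contradiction
      have hev1 : ∀ᶠ r in 𝓝[>](0:ℝ), r ^ (q-2) * ρ ^ (2-q) ≤ 1/2 := by
        have h0 : Tendsto (fun r : ℝ => r ^ (q-2) * ρ ^ (2-q)) (𝓝[>](0:ℝ)) (𝓝 (0 * ρ ^ (2-q))) :=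
          (tendsto_rpow_zero' (by linarith)).mul_const _
        rw [zero_mul] at h0
        exact h0.eventually (eventually_le_nhds (by norm_num))
      have hev2 : ∀ᶠ r in 𝓝[>](0:ℝ), r ^ μ * w r ≤ P + 1 :=
        hwlim.eventually (eventually_le_nhds (by linarith))
      have hev3 : ∀ᶠ r in 𝓝[>](0:ℝ), r ^ (q-2-μ) ≤ K/2 / (2*(P+1)) := by
        have h0 := tendsto_rpow_zero' (by linarith : 0 < q-2-μ)
        exact h0.eventually (eventually_le_nhds (by positivity))
      obtain ⟨r, hrI, hr1, hr2, hr3⟩ :=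
        ((eventually_mem_set.2 (Ioo_mem_nhdsGT hρ)).and (hev1.and (hev2.and hev3))).exists
      have hr0 : 0 < r := hrI.1
      have hK2 : K/2 ≤ r ^ (q-2) * w r := by
        have h1 := key r hrI
        have h2 : (0:ℝ) < r ^ (q-2) := Real.rpow_pos_of_pos hr0 _
        have h3 : r ^ (q-2) * (K * r ^ (2-q) - K * ρ ^ (2-q)) ≤ r ^ (q-2) * w r :=
          mul_le_mul_of_nonneg_left h1 h2.le
        have h4 : r ^ (q-2) * r ^ (2-q) = 1 := by
          rw [← Real.rpow_add hr0]; norm_num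
        calc K/2 = K * 1 - K * (1/2) := by ring
          _ ≤ K * 1 - K * (r ^ (q-2) * ρ ^ (2-q)) := by nlinarith [hr1, hK]
          _ = r ^ (q-2) * (K * r ^ (2-q) - K * ρ ^ (2-q)) := by
              rw [mul_sub]; rw [show r ^ (q-2) * (K * r ^ (2-q)) = K * (r ^ (q-2) * r ^ (2-q)) by ring, h4]
              ring
          _ ≤ r ^ (q-2) * w r := h3
      have hup2 : r ^ (q-2) * w r ≤ K/4 := by
        have e : r ^ (q-2) = r ^ (q-2-μ) * r ^ μ := by
          rw [← Real.rpow_add hr0]; ring_nf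
        have hwr : 0 < w r := hwpos r ⟨hr0, lt_trans hrI.2 hρδ⟩
        have h5 : (0:ℝ) < r ^ μ * w r := mul_pos (Real.rpow_pos_of_pos hr0 _) hwr
        calc r ^ (q-2) * w r = r ^ (q-2-μ) * (r ^ μ * w r) := by rw [e]; ring
          _ ≤ (K/2 / (2*(P+1))) * (P+1) := by
              apply mul_le_mul hr3 hr2 h5.le (by positivity)
          _ ≤ K/4 := by
              rw [div_mul_eq_mul_div, div_le_iff₀ (by positivity : (0:ℝ) < 2*(P+1))]
              nlinarith [hK, hP]
      linarith
    · -- c > 0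
      obtain ⟨δ₁, hδ₁, hb⟩ := ev_Ioo (hdw.eventually (eventually_ge_nhds (by linarith : c/2 < c)))
      set ρ := min δ₁ δ / 2 with hρdef
      have hρ : 0 < ρ := by positivity
      have hρδ₁ : ρ < δ₁ := by
        have h1 := min_le_left δ₁ δ
        have : 0 < min δ₁ δ := lt_min hδ₁ hδ
        rw [hρdef]; linarith
      have hρδ : ρ < δ := by
        have h2 := min_le_right δ₁ δ
        have : 0 < min δ₁ δ := lt_min hδ₁ hδ
        rw [hρdef]; linarith
      have hwρ : 0 < w ρ := hwpos ρ ⟨hρ, hρδ⟩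
      set K := -((c/2)/(2-q)) with hKdef
      have hK : 0 < K := by
        rw [hKdef]; rw [neg_pos]
        exact div_neg_of_pos_of_neg (by linarith) (by linarith)
      have key : ∀ r ∈ Ioo (0:ℝ) ρ, w r ≤ w ρ - K * r ^ (2-q) + K * ρ ^ (2-q) := by
        intro r hr
        have hlo := deriv_lower (C := c/2) (p := 1-q) hq1 hr.1 hr.2.le
          (fun s hs => hwd s ⟨lt_of_lt_of_le hr.1 hs.1, lt_of_le_of_lt hs.2 hρδ⟩)
          (fun s hs => by
            have hs0 : 0 < s := lt_trans hr.1 hs.1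
            have hbs := hb s ⟨hs0, lt_trans hs.2 hρδ₁⟩
            have hpow : (0:ℝ) < s ^ (q-1) := Real.rpow_pos_of_pos hs0 _
            have : (c/2) / s ^ (q-1) ≤ dw s := by
              rw [div_le_iff₀ hpow]; linarith [hbs]
            calc (c/2) * s ^ (1-q) = (c/2) / s ^ (q-1) := by
                  rw [show (1:ℝ)-q = -(q-1) from by ring, Real.rpow_neg hs0.le]; ring
              _ ≤ dw s := this)
        have e : (1:ℝ) - q + 1 = 2 - q := by ring
        rw [e] at hlo
        -- hlo : -K * ρ^(2-q) - (-K) * r^(2-q) ≤ w ρ - w r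
        have : (c/2)/(2-q) = -K := by rw [hKdef]; ring
        rw [this] at hlo
        linarith
      have hev1 : ∀ᶠ r in 𝓝[>](0:ℝ), w ρ + K * ρ ^ (2-q) + 1 ≤ K * r ^ (2-q) := by
        have h0 : Tendsto (fun r : ℝ => K * r ^ (2-q)) (𝓝[>](0:ℝ)) atTop :=
          (tendsto_rpow_neg_top' (by linarith)).const_mul_atTop hK
        exact h0.eventually_ge_atTop _
      obtain ⟨r, hrI, hr1⟩ := ((eventually_mem_set.2 (Ioo_mem_nhdsGT hρ)).and hev1).exists
      have := key r hrI
      have := hwpos r ⟨hrI.1, lt_trans hrI.2 hρδ⟩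
      linarith
  · -- μ > q - 2 : boundedness route
    set q' := max q (2 + μ/2) with hq'def
    have hq'2 : 2 < q' := lt_of_lt_of_le (by linarith) (le_max_right _ _)
    have hqq' : q ≤ q' := le_max_left _ _
    have hμ2 : 0 < μ + 2 - q' := by
      rcases max_cases q (2 + μ/2) with ⟨h1, h2⟩ | ⟨h1, h2⟩ <;> rw [hq'def, h1] <;> linarith
    have hq'1 : (1:ℝ) - q' ≠ -1 := by
      intro h
      have h2 : q' = 2 := by linarith
      linarith
    obtain ⟨δ₁, hδ₁, hb⟩ := ev_Ioo (hdw.eventually (eventually_mem_set.2 (Metric.ball_mem_nhds c one_pos)))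
    set ρ := min (min δ₁ δ) 1 / 2 with hρdef
    have hρ : 0 < ρ := by positivity
    have hmin : 0 < min (min δ₁ δ) 1 := lt_min (lt_min hδ₁ hδ) one_pos
    have hρδ₁ : ρ < δ₁ := by
      have := min_le_left δ₁ δ; have := min_le_left (min δ₁ δ) 1
      rw [hρdef]; linarith
    have hρδ : ρ < δ := by
      have := min_le_right δ₁ δ; have := min_le_left (min δ₁ δ) 1
      rw [hρdef]; linarith
    have hρ1 : ρ < 1 := by
      have := min_le_right (min δ₁ δ) 1
      rw [hρdef]; linarith
    have hwρ : 0 < w ρ := hwpos ρ ⟨hρ, hρδ⟩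
    set C := |c| + 1 with hCdef
    have hC : 0 < C := by positivity
    have hdb : ∀ s ∈ Ioo (0:ℝ) ρ, -(C * s ^ (1-q')) ≤ dw s ∧ dw s ≤ C * s ^ (1-q') := by
      intro s hs
      have hs0 : 0 < s := hs.1
      have hbs := hb s ⟨hs0, lt_trans hs.2 hρδ₁⟩
      rw [Metric.mem_ball, Real.dist_eq] at hbs
      have habs : |s ^ (q-1) * dw s| ≤ C := by
        rw [hCdef]
        have h9 := abs_sub_abs_le_abs_sub (s ^ (q-1) * dw s) c
        linarith
      have hpow : (0:ℝ) < s ^ (q-1) := Real.rpow_pos_of_pos hs0 _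
      have h2 : |dw s| ≤ C * s ^ (1-q) := by
        rw [abs_mul, abs_of_pos hpow] at habs
        have e : s ^ (1-q) * s ^ (q-1) = 1 := by rw [← Real.rpow_add hs0]; norm_num
        have h5 := mul_le_mul_of_nonneg_left habs (Real.rpow_pos_of_pos hs0 (1-q)).le
        calc |dw s| = s ^ (1-q) * (s ^ (q-1) * |dw s|) := by rw [← mul_assoc, e, one_mul]
          _ ≤ s ^ (1-q) * C := h5
          _ = C * s ^ (1-q) := mul_comm _ _
      have h3 : s ^ (1-q) ≤ s ^ (1-q') := by
        apply Real.rpow_le_rpow_of_exponent_ge hs0 (le_of_lt (lt_trans hs.2 hρ1))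
        linarith
      have h4 : |dw s| ≤ C * s ^ (1-q') := le_trans h2 (by nlinarith [h3, hC])
      exact ⟨neg_le_of_abs_le h4 |>.trans_eq' rfl |>.trans_eq rfl, le_of_abs_le h4⟩
    set K := C / (q'-2) with hKdef
    have hK : 0 < K := div_pos hC (by linarith)
    have key : ∀ r ∈ Ioo (0:ℝ) ρ, w r ≤ w ρ + K * r ^ (2-q') := by
      intro r hr
      have hlo := deriv_lower (C := -C) (p := 1-q') hq'1 hr.1 hr.2.le
        (fun s hs => hwd s ⟨lt_of_lt_of_le hr.1 hs.1, lt_of_le_of_lt hs.2 hρδ⟩)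
        (fun s hs => by
          have := (hdb s ⟨lt_trans hr.1 hs.1, hs.2⟩).1
          calc (-C) * s ^ (1-q') = -(C * s ^ (1-q')) := by ring
            _ ≤ dw s := this)
      have e : (1:ℝ) - q' + 1 = 2 - q' := by ring
      rw [e] at hlo
      have hKe : (-C)/(2-q') = K := by rw [hKdef]; rw [div_eq_div_iff] <;> [ring; linarith; linarith]
      rw [hKe] at hlo
      -- hlo : K * ρ^(2-q') - K * r^(2-q') ≤ w ρ - w r
      have hpos : 0 < K * ρ ^ (2-q') := mul_pos hK (Real.rpow_pos_of_pos hρ _)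
      linarith
    have hev2 : ∀ᶠ r in 𝓝[>](0:ℝ), P/2 ≤ r ^ μ * w r :=
      hwlim.eventually (eventually_ge_nhds (by linarith))
    have hev3 : ∀ᶠ r in 𝓝[>](0:ℝ), r ^ μ * w ρ + K * r ^ (μ+2-q') ≤ P/4 := by
      have h0 : Tendsto (fun r : ℝ => r ^ μ * w ρ + K * r ^ (μ+2-q')) (𝓝[>](0:ℝ))
          (𝓝 (0 * w ρ + K * 0)) :=
        ((tendsto_rpow_zero' hμ).mul_const _).add ((tendsto_rpow_zero' hμ2).const_mul _)
      rw [zero_mul, mul_zero, add_zero] at h0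
      exact h0.eventually (eventually_le_nhds (by linarith))
    obtain ⟨r, hrI, hr2, hr3⟩ := ((eventually_mem_set.2 (Ioo_mem_nhdsGT hρ)).and (hev2.and hev3)).exists
    have hr0 : 0 < r := hrI.1
    have hkey := key r hrI
    have h6 : r ^ μ * w r ≤ r ^ μ * w ρ + K * r ^ (μ+2-q') := by
      have e : r ^ (μ+2-q') = r ^ μ * r ^ (2-q') := by rw [← Real.rpow_add hr0]; ring_nf
      have h7 : r ^ μ * w r ≤ r ^ μ * (w ρ + K * r ^ (2-q')) :=
        mul_le_mul_of_nonneg_left hkey (Real.rpow_pos_of_pos hr0 _).le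
      rw [e]; calc r ^ μ * w r ≤ r ^ μ * (w ρ + K * r ^ (2-q')) := h7
        _ = r ^ μ * w ρ + K * (r ^ μ * r ^ (2-q')) := by ring
    linarith

lemma Gest {G f : ℝ → ℝ} {Z η ε γ nn δ : ℝ} (hZ : 0 < Z) (hγn : nn - γ ≠ 0)
    (hGd : ∀ r ∈ Ioi (0:ℝ), HasDerivAt G (Z * (r ^ (nn-1) * f r)) r)
    (hfb : ∀ s ∈ Ioo (0:ℝ) δ, (η-ε) * s ^ (-γ) ≤ f s ∧ f s ≤ (η+ε) * s ^ (-γ))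
    {a b : ℝ} (ha : 0 < a) (hab : a ≤ b) (hb : b < δ) :
    Z*(η-ε)/(nn-γ) * b ^ (nn-γ) - Z*(η-ε)/(nn-γ) * a ^ (nn-γ) ≤ G b - G a ∧
    G b - G a ≤ Z*(η+ε)/(nn-γ) * b ^ (nn-γ) - Z*(η+ε)/(nn-γ) * a ^ (nn-γ) := by
  have hp : nn - 1 - γ ≠ -1 := by intro h; apply hγn; linarith
  have hIcc : ∀ s ∈ Icc a b, HasDerivAt G (Z * (s ^ (nn-1) * f s)) s :=
    fun s hs => hGd s (lt_of_lt_of_le ha hs.1)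
  have e2 : nn - 1 - γ + 1 = nn - γ := by ring
  constructor
  · have h := deriv_lower (C := Z*(η-ε)) (p := nn-1-γ) hp ha hab hIcc ?_
    · rw [e2] at h
      have e3 : Z*(η-ε)/(nn-γ) = Z*(η-ε)/(nn-1-γ+1) := by rw [e2]
      rw [e3]; rw [e2]; exact h
    · intro s hs
      have hs0 : 0 < s := lt_trans ha hs.1
      have hf := (hfb s ⟨hs0, lt_trans hs.2 hb⟩).1
      have e : s ^ (nn-1-γ) = s ^ (nn-1) * s ^ (-γ) := by rw [← Real.rpow_add hs0]; ring_nf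
      calc Z*(η-ε) * s ^ (nn-1-γ) = Z * (s ^ (nn-1) * ((η-ε) * s ^ (-γ))) := by rw [e]; ring
        _ ≤ Z * (s ^ (nn-1) * f s) := by
            apply mul_le_mul_of_nonneg_left _ hZ.le
            exact mul_le_mul_of_nonneg_left hf (Real.rpow_nonneg hs0.le _)
  · have h := deriv_upper (C := Z*(η+ε)) (p := nn-1-γ) hp ha hab hIcc ?_
    · rw [e2] at h
      have e3 : Z*(η+ε)/(nn-γ) = Z*(η+ε)/(nn-1-γ+1) := by rw [e2]
      rw [e3]; rw [e2]; exact h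
    · intro s hs
      have hs0 : 0 < s := lt_trans ha hs.1
      have hf := (hfb s ⟨hs0, lt_trans hs.2 hb⟩).2
      have e : s ^ (nn-1-γ) = s ^ (nn-1) * s ^ (-γ) := by rw [← Real.rpow_add hs0]; ring_nf
      calc Z * (s ^ (nn-1) * f s) ≤ Z * (s ^ (nn-1) * ((η+ε) * s ^ (-γ))) := by
            apply mul_le_mul_of_nonneg_left _ hZ.le
            exact mul_le_mul_of_nonneg_left hf (Real.rpow_nonneg hs0.le _)
        _ = Z*(η+ε) * s ^ (nn-1-γ) := by rw [e]; ring

set_option maxHeartbeats 4000000 in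
/-- **Corollary 1.6.** Let `n ≥ 3`, `0 < m < (n-2)/n`, `γ > 0` with `γ ≠ 2/(1-m)`, `η > 0`.
Let `α ∈ ℝ` and `β ≠ 0` satisfy `α = (2β−1)/(1-m)`. If there exists a radially symmetric
solution `f` of `Δ(f^m/m) + αf + βx·∇f = 0`, `f > 0`, in `ℝⁿ \ {0}` satisfying
`lim_{r→0⁺} r^γ f(r) = η`, then `α < 0` and `β < 0`. -/
theorem stmt_5 (n : ℕ) (hn : 3 ≤ n) (m γ η α β : ℝ)
    (hm0 : 0 < m) (hm1 : m < ((n : ℝ) - 2) / n)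
    (hγ0 : 0 < γ) (hγ : γ ≠ 2 / (1 - m)) (hη : 0 < η)
    (hβ : β ≠ 0) (hαβ : α = (2 * β - 1) / (1 - m))
    (f : ℝ → ℝ)
    (hpos : ∀ r ∈ Ioi (0 : ℝ), 0 < f r)
    (hreg : ContDiffOn ℝ 2 f (Ioi (0 : ℝ)))
    (hode : ∀ r ∈ Ioi (0 : ℝ),
      deriv (deriv (fun s => f s ^ m / m)) r
        + ((n : ℝ) - 1) / r * deriv (fun s => f s ^ m / m) r
        + α * f r + β * r * deriv f r = 0)
    (hlim : Tendsto (fun r => r ^ γ * f r) (nhdsWithin 0 (Ioi 0)) (nhds η)) :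
    α < 0 ∧ β < 0 := by
  have hn3 : (3:ℝ) ≤ (n:ℝ) := by exact_mod_cast hn
  have hnpos : (0:ℝ) < n := by linarith
  have hnm : (n:ℝ) * m < (n:ℝ) - 2 := by
    have h := (lt_div_iff₀ hnpos).1 hm1
    linarith
  have hm1' : m < 1 := by nlinarith
  have h1m : 0 < 1 - m := by linarith
  have hkey : β < 0 := by
    rcases hβ.lt_or_gt with hneg | hβpos
    · exact hneg
    exfalso
    set w : ℝ → ℝ := fun s => f s ^ m / m with hwdef
    have hwpos : ∀ r ∈ Ioi (0:ℝ), 0 < w r := fun r hr =>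
      div_pos (Real.rpow_pos_of_pos (hpos r hr) m) hm0
    have hw2 : ContDiffOn ℝ 2 w (Ioi 0) :=
      (hreg.rpow_const_of_ne (fun x hx => (hpos x hx).ne')).div_const m
    have hfd : ∀ r ∈ Ioi (0:ℝ), HasDerivAt f (deriv f r) r := fun r hr =>
      ((hreg.differentiableOn (by norm_num)).differentiableAt (isOpen_Ioi.mem_nhds hr)).hasDerivAt
    have hwd : ∀ r ∈ Ioi (0:ℝ), HasDerivAt w (deriv w r) r := fun r hr =>
      ((hw2.differentiableOn (by norm_num)).differentiableAt (isOpen_Ioi.mem_nhds hr)).hasDerivAt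
    have hw1 : ContDiffOn ℝ 1 (deriv w) (Ioi 0) := hw2.deriv_of_isOpen isOpen_Ioi (by norm_num)
    have hwd2 : ∀ r ∈ Ioi (0:ℝ), HasDerivAt (deriv w) (deriv (deriv w) r) r := fun r hr =>
      ((hw1.differentiableOn (by norm_num)).differentiableAt (isOpen_Ioi.mem_nhds hr)).hasDerivAt
    have hn2 : 0 < (n:ℝ)*(1-m) - 2 := by nlinarith
    have hZ : 0 < (n:ℝ)*β - α := by
      rw [hαβ]
      have e : (n:ℝ)*β - (2*β-1)/(1-m) = ((n:ℝ)*β*(1-m) - (2*β-1))/(1-m) := by field_simp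
      rw [e]
      apply div_pos _ h1m
      nlinarith [mul_pos hβpos hn2]
    set Z := (n:ℝ)*β - α with hZdef
    set G : ℝ → ℝ := fun r => r ^ ((n:ℝ)-1) * deriv w r + β * (r ^ (n:ℝ) * f r) with hGdef
    have hGd : ∀ r ∈ Ioi (0:ℝ), HasDerivAt G (Z * (r ^ ((n:ℝ)-1) * f r)) r := by
      intro r hr
      have hr0 : (0:ℝ) < r := hr
      have h1 : HasDerivAt (fun x : ℝ => x ^ ((n:ℝ)-1)) (((n:ℝ)-1) * r ^ ((n:ℝ)-1-1)) r :=
        Real.hasDerivAt_rpow_const (Or.inl hr0.ne')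
      have h2 : HasDerivAt (fun x : ℝ => x ^ (n:ℝ)) ((n:ℝ) * r ^ ((n:ℝ)-1)) r :=
        Real.hasDerivAt_rpow_const (Or.inl hr0.ne')
      have hD := (h1.mul (hwd2 r hr)).add ((h2.mul (hfd r hr)).const_mul β)
      convert hD using 1
      case e'_4 => exact rfl
      case e'_5 => exact rfl
      case e'_8 => exact rfl
      have hode' := hode r hr
      have hsolve : deriv (deriv w) r =
          -((((n:ℝ)-1))/r * deriv w r) - α*f r - β*(r*deriv f r) := by linarith
      have e1 : r ^ ((n:ℝ)-1) = r ^ ((n:ℝ)-1-1) * r := by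
        rw [← Real.rpow_add_one hr0.ne' ((n:ℝ)-1-1)]; norm_num
      have e2 : r ^ ((n:ℝ)) = (r ^ ((n:ℝ)-1-1) * r) * r := by
        rw [← e1, ← Real.rpow_add_one hr0.ne']; norm_num
      rw [hZdef, e1, e2, hsolve]
      field_simp
      ring
    -- limits
    set μ := γ * m with hμdef
    have hμ : 0 < μ := mul_pos hγ0 hm0
    set P := η ^ m / m with hPdef
    have hP : 0 < P := div_pos (Real.rpow_pos_of_pos hη m) hm0
    have hwlim : Tendsto (fun r => r ^ μ * w r) (𝓝[>] (0:ℝ)) (𝓝 P) := by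
      have h1 : Tendsto (fun r => (r ^ γ * f r) ^ m / m) (𝓝[>] (0:ℝ)) (𝓝 P) :=
        (hlim.rpow_const (Or.inl hη.ne')).div_const m
      apply h1.congr'
      filter_upwards [self_mem_nhdsWithin] with r (hr : 0 < r)
      have e : (r ^ γ * f r) ^ m = r ^ μ * f r ^ m := by
        rw [Real.mul_rpow (Real.rpow_nonneg hr.le γ) (hpos r hr).le, hμdef,
          Real.rpow_mul hr.le]
      rw [e, hwdef]; simp [mul_div_assoc]
    have hfb : ∀ ε : ℝ, 0 < ε → ∃ δ > (0:ℝ), ∀ s ∈ Ioo (0:ℝ) δ,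
        (η-ε) * s ^ (-γ) ≤ f s ∧ f s ≤ (η+ε) * s ^ (-γ) := by
      intro ε hε
      apply ev_Ioo
      have hev := hlim.eventually (eventually_mem_set.2 (Metric.ball_mem_nhds η hε))
      filter_upwards [hev, self_mem_nhdsWithin] with r h (hr0 : 0 < r)
      rw [Metric.mem_ball, Real.dist_eq, abs_lt] at h
      have hrp : (0:ℝ) < r ^ (-γ) := Real.rpow_pos_of_pos hr0 _
      have e : r ^ (-γ) * (r ^ γ * f r) = f r := by
        rw [← mul_assoc, ← Real.rpow_add hr0]; simp
      constructor
      · have := mul_le_mul_of_nonneg_left (le_of_lt (by linarith : η - ε < r ^ γ * f r)) hrp.le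
        rw [e] at this; linarith [this]
      · have := mul_le_mul_of_nonneg_left (le_of_lt (by linarith : r ^ γ * f r < η + ε)) hrp.le
        rw [e] at this; linarith [this]
    have hμγ : μ ≠ γ - 2 := by
      intro h
      apply hγ
      rw [hμdef] at h
      field_simp
      linarith
    have hct : γ ≠ (n:ℝ) → (μ < γ - 2 → Z*η/((n:ℝ)-γ) - β*η ≠ 0) := by
      intro hne hlt h0
      have hnγ0 : (n:ℝ) - γ ≠ 0 := sub_ne_zero_of_ne (Ne.symm hne)
      have e : Z*η/((n:ℝ)-γ) - β*η = η*(β*γ-α)/((n:ℝ)-γ) := by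
        rw [hZdef]; field_simp; ring
      rw [e, div_eq_zero_iff] at h0
      rcases h0 with h0 | h0
      · have hβγ : β*γ - α = 0 := by
          rcases mul_eq_zero.1 h0 with h | h
          · exact absurd h hη.ne'
          · exact h
        have hba : β*γ*(1-m) = 2*β-1 := by
          rw [hαβ] at hβγ
          field_simp at hβγ
          linarith
        have hγ1m : γ*(1-m) < 2 := by nlinarith
        rw [hμdef] at hlt
        nlinarith
      · exact hnγ0 h0
    rcases lt_trichotomy γ (n:ℝ) with hγn | hγn | hγn
    · -- γ < n
      have hnγ : 0 < (n:ℝ) - γ := by linarith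
      have hμn2 : μ ≠ (n:ℝ) - 2 := by
        intro h
        have h2 : γ * m < (n:ℝ) * m := by nlinarith
        rw [hμdef] at h; linarith
      obtain ⟨δ₀, hδ₀, hfb0⟩ := hfb (η/2) (by linarith)
      have hGmono : MonotoneOn G (Ioi (0:ℝ)) := by
        apply monotoneOn_of_deriv_nonneg (convex_Ioi 0)
        · exact fun r hr => (hGd r hr).continuousAt.continuousWithinAt
        · rw [interior_Ioi]
          exact fun r hr => (hGd r hr).differentiableAt.differentiableWithinAt
        · rw [interior_Ioi]; intro r hr
          rw [(hGd r hr).deriv]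
          exact mul_nonneg hZ.le
            (mul_nonneg (Real.rpow_nonneg (le_of_lt hr) _) (hpos r hr).le)
      set δ₁ := δ₀/2 with hδ₁def
      have hδ₁ : 0 < δ₁ := by positivity
      have hδ₁δ₀ : δ₁ < δ₀ := by rw [hδ₁def]; linarith
      have hB0 : 0 ≤ Z*(η+η/2)/((n:ℝ)-γ) := by positivity
      have hlb : ∀ r ∈ Ioo (0:ℝ) δ₁, G δ₁ - Z*(η+η/2)/((n:ℝ)-γ) * δ₁ ^ ((n:ℝ)-γ) ≤ G r := by
        intro r hr
        have h := (Gest hZ (by linarith) hGd hfb0 hr.1 hr.2.le hδ₁δ₀).2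
        have h2 : 0 ≤ Z*(η+η/2)/((n:ℝ)-γ) * r ^ ((n:ℝ)-γ) :=
          mul_nonneg hB0 (Real.rpow_nonneg hr.1.le _)
        linarith
      have hne : (G '' Ioo 0 δ₁).Nonempty :=
        ⟨G (δ₁/2), ⟨δ₁/2, ⟨by positivity, by linarith⟩, rfl⟩⟩
      have hbdd : BddBelow (G '' Ioo 0 δ₁) := by
        refine ⟨G δ₁ - Z*(η+η/2)/((n:ℝ)-γ) * δ₁ ^ ((n:ℝ)-γ), ?_⟩
        rintro x ⟨r, hr, rfl⟩
        exact hlb r hr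
      set L := sInf (G '' Ioo 0 δ₁) with hLdef
      have hLle : ∀ r ∈ Ioo (0:ℝ) δ₁, L ≤ G r := fun r hr => csInf_le hbdd ⟨r, hr, rfl⟩
      have hGtend : Tendsto G (𝓝[>] (0:ℝ)) (𝓝 L) := by
        rw [tendsto_order]
        constructor
        · intro b hb
          filter_upwards [Ioo_mem_nhdsGT hδ₁] with r hr
          exact lt_of_lt_of_le hb (hLle r hr)
        · intro b hb
          obtain ⟨x, ⟨s₀, hs₀, rfl⟩, hxb⟩ := exists_lt_of_csInf_lt hne hb
          filter_upwards [Ioo_mem_nhdsGT hs₀.1] with r hr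
          exact lt_of_le_of_lt (hGmono hr.1 hs₀.1 hr.2.le) hxb
      have hβf : Tendsto (fun r => β * (r ^ (n:ℝ) * f r)) (𝓝[>](0:ℝ)) (𝓝 0) := by
        have h1 : Tendsto (fun r => β * (r ^ ((n:ℝ)-γ) * (r ^ γ * f r)))
            (𝓝[>](0:ℝ)) (𝓝 (β * (0 * η))) := ((tendsto_rpow_zero' hnγ).mul hlim).const_mul β
        rw [zero_mul, mul_zero] at h1
        apply h1.congr'
        filter_upwards [self_mem_nhdsWithin] with r (hr : 0 < r)
        have e : r ^ ((n:ℝ)-γ) * r ^ γ = r ^ (n:ℝ) := by rw [← Real.rpow_add hr]; ring_nf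
        linear_combination β * f r * e
      have hw'tend : Tendsto (fun r => r ^ ((n:ℝ)-1) * deriv w r) (𝓝[>](0:ℝ)) (𝓝 L) := by
        have h := hGtend.sub hβf
        rw [sub_zero] at h
        apply h.congr
        intro r
        simp only [hGdef]
        ring
      by_cases hL0 : L = 0
      · -- refined estimate
        have hGub : ∀ ε : ℝ, 0 < ε → ε < η → ∃ δε > (0:ℝ), ∀ r ∈ Ioo (0:ℝ) δε,
            Z*(η-ε)/((n:ℝ)-γ) * r ^ ((n:ℝ)-γ) ≤ G r ∧
            G r ≤ Z*(η+ε)/((n:ℝ)-γ) * r ^ ((n:ℝ)-γ) := by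
          intro ε hε hεη
          obtain ⟨δε, hδε, hfbε⟩ := hfb ε hε
          refine ⟨min δε δ₁, lt_min hδε hδ₁, ?_⟩
          intro r hr
          have hr0 : 0 < r := hr.1
          have hrδε : r < δε := lt_of_lt_of_le hr.2 (min_le_left _ _)
          have hrδ₁ : r < δ₁ := lt_of_lt_of_le hr.2 (min_le_right _ _)
          have hA0 : 0 ≤ Z*(η-ε)/((n:ℝ)-γ) := by
            apply div_nonneg _ hnγ.le
            nlinarith
          have hB0' : 0 ≤ Z*(η+ε)/((n:ℝ)-γ) := by
            apply div_nonneg _ hnγ.le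
            nlinarith
          constructor
          · by_contra hcon
            push_neg at hcon
            have hgpos : 0 < Z*(η-ε)/((n:ℝ)-γ) * r ^ ((n:ℝ)-γ) - G r := by linarith
            have hth : Tendsto (fun a : ℝ => Z*(η-ε)/((n:ℝ)-γ) * a ^ ((n:ℝ)-γ))
                (𝓝[>](0:ℝ)) (𝓝 (Z*(η-ε)/((n:ℝ)-γ) * 0)) :=
              (tendsto_rpow_zero' hnγ).const_mul _
            rw [mul_zero] at hth
            obtain ⟨a, haI, ha2⟩ := ((eventually_mem_set.2 (Ioo_mem_nhdsGT hr0)).and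
              (hth.eventually (eventually_lt_nhds hgpos))).exists
            have hstep := (Gest hZ (by linarith) hGd hfbε haI.1 haI.2.le hrδε).1
            have hGa : 0 ≤ G a := by
              have := hLle a ⟨haI.1, lt_trans haI.2 hrδ₁⟩
              rw [hL0] at this; linarith
            set X := Z * (η - ε) / ((n:ℝ) - γ) * r ^ ((n:ℝ) - γ) with hXdef
            set Y := Z * (η - ε) / ((n:ℝ) - γ) * a ^ ((n:ℝ) - γ) with hYdef
            linarith
          · by_contra hcon
            push_neg at hcon
            have hgpos : 0 < G r - Z*(η+ε)/((n:ℝ)-γ) * r ^ ((n:ℝ)-γ) := by linarith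
            have hGa : ∀ᶠ a in 𝓝[>](0:ℝ), G a < G r - Z*(η+ε)/((n:ℝ)-γ) * r ^ ((n:ℝ)-γ) :=
              hGtend.eventually (eventually_lt_nhds (by rw [hL0]; linarith))
            obtain ⟨a, haI, ha2⟩ := ((eventually_mem_set.2 (Ioo_mem_nhdsGT hr0)).and hGa).exists
            have hstep := (Gest hZ (by linarith) hGd hfbε haI.1 haI.2.le hrδε).2
            have h2 : 0 ≤ Z*(η+ε)/((n:ℝ)-γ) * a ^ ((n:ℝ)-γ) :=
              mul_nonneg hB0' (Real.rpow_nonneg haI.1.le _)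
            linarith
        have hGsq : Tendsto (fun r => r ^ (γ-(n:ℝ)) * G r) (𝓝[>](0:ℝ))
            (𝓝 (Z*η/((n:ℝ)-γ))) := by
          rw [Metric.tendsto_nhdsWithin_nhds]
          intro ε hε
          set ε' := min (η/2) (((n:ℝ)-γ)*ε/(2*Z)) with hε'def
          have hε'pos : 0 < ε' := lt_min (by linarith) (by positivity)
          have hε'η : ε' < η := lt_of_le_of_lt (min_le_left _ _) (by linarith)
          have hε'b : Z*ε'/((n:ℝ)-γ) < ε := by
            have h1 : ε' ≤ ((n:ℝ)-γ)*ε/(2*Z) := min_le_right _ _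
            rw [div_lt_iff₀ hnγ]
            calc Z*ε' ≤ Z*(((n:ℝ)-γ)*ε/(2*Z)) := by nlinarith
              _ = ((n:ℝ)-γ)*ε/2 := by field_simp
              _ < ε*((n:ℝ)-γ) := by nlinarith
          obtain ⟨δε, hδε, hbd⟩ := hGub ε' hε'pos hε'η
          refine ⟨δε, hδε, ?_⟩
          intro x hx hdist
          have hx0 : (0:ℝ) < x := hx
          rw [Real.dist_eq, sub_zero, abs_of_pos hx0] at hdist
          have hb := hbd x ⟨hx0, hdist⟩
          have hxp : (0:ℝ) < x ^ (γ-(n:ℝ)) := Real.rpow_pos_of_pos hx0 _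
          have e : x ^ (γ-(n:ℝ)) * x ^ ((n:ℝ)-γ) = 1 := by
            rw [← Real.rpow_add hx0]; norm_num
          have h1 : Z*(η-ε')/((n:ℝ)-γ) ≤ x ^ (γ-(n:ℝ)) * G x := by
            have h2 := mul_le_mul_of_nonneg_left hb.1 hxp.le
            calc Z*(η-ε')/((n:ℝ)-γ) = Z*(η-ε')/((n:ℝ)-γ) * (x ^ (γ-(n:ℝ)) * x ^ ((n:ℝ)-γ)) := by
                  rw [e, mul_one]
              _ = x ^ (γ-(n:ℝ)) * (Z*(η-ε')/((n:ℝ)-γ) * x ^ ((n:ℝ)-γ)) := by ring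
              _ ≤ x ^ (γ-(n:ℝ)) * G x := h2
          have h2 : x ^ (γ-(n:ℝ)) * G x ≤ Z*(η+ε')/((n:ℝ)-γ) := by
            have h3 := mul_le_mul_of_nonneg_left hb.2 hxp.le
            calc x ^ (γ-(n:ℝ)) * G x ≤ x ^ (γ-(n:ℝ)) * (Z*(η+ε')/((n:ℝ)-γ) * x ^ ((n:ℝ)-γ)) := h3
              _ = Z*(η+ε')/((n:ℝ)-γ) * (x ^ (γ-(n:ℝ)) * x ^ ((n:ℝ)-γ)) := by ring
              _ = Z*(η+ε')/((n:ℝ)-γ) := by rw [e, mul_one]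
          rw [Real.dist_eq, abs_lt]
          have e1 : Z*(η-ε')/((n:ℝ)-γ) = Z*η/((n:ℝ)-γ) - Z*ε'/((n:ℝ)-γ) := by ring
          have e2 : Z*(η+ε')/((n:ℝ)-γ) = Z*η/((n:ℝ)-γ) + Z*ε'/((n:ℝ)-γ) := by ring
          constructor <;> [linarith; linarith]
        have hdw : Tendsto (fun r => r ^ (γ-1) * deriv w r) (𝓝[>](0:ℝ))
            (𝓝 (Z*η/((n:ℝ)-γ) - β*η)) := by
          have h := hGsq.sub ((hlim.const_mul β))
          apply h.congr'
          filter_upwards [self_mem_nhdsWithin] with x (hx : 0 < x)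
          have e1 : x ^ (γ-(n:ℝ)) * x ^ ((n:ℝ)-1) = x ^ (γ-1) := by
            rw [← Real.rpow_add hx]; ring_nf
          have e2 : x ^ (γ-(n:ℝ)) * x ^ ((n:ℝ)) = x ^ γ := by
            rw [← Real.rpow_add hx]; ring_nf
          simp only [hGdef]
          linear_combination (deriv w x) * e1 + β * f x * e2
        exact lemA hδ₀ hμ hP (fun r hr => hwpos r hr.1) (fun r hr => hwd r hr.1) hwlim hdw
          hμγ (hct hγn.ne)
      · exact lemA hδ₀ hμ hP (fun r hr => hwpos r hr.1) (fun r hr => hwd r hr.1) hwlim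
          hw'tend hμn2 (fun _ => hL0)
    · -- γ = n
      obtain ⟨δ₀, hδ₀, hfb0⟩ := hfb (η/2) (by linarith)
      set c := Z*(η/2) with hcdef
      have hcpos : 0 < c := by rw [hcdef]; positivity
      set δ' := δ₀/2 with hδ'def
      have hδ' : 0 < δ' := by rw [hδ'def]; positivity
      have hδ'δ₀ : δ' < δ₀ := by rw [hδ'def]; linarith
      have hGlog : ∀ r ∈ Ioo (0:ℝ) δ', G r ≤ G δ' - c*Real.log δ' + c*Real.log r := by
        intro r hr
        have h := deriv_lower_log (C := c) hr.1 hr.2.le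
          (fun s hs => hGd s (lt_of_lt_of_le hr.1 hs.1)) ?_
        · linarith
        · intro s hs
          have hs0 : 0 < s := lt_trans hr.1 hs.1
          have hf := (hfb0 s ⟨hs0, lt_trans hs.2 hδ'δ₀⟩).1
          have e : s ^ ((n:ℝ)-1) * s ^ (-γ) = s⁻¹ := by
            rw [← Real.rpow_add hs0, hγn,
              show (n:ℝ) - 1 + -(n:ℝ) = -1 by ring, Real.rpow_neg_one]
          calc c * s⁻¹ = Z * (s ^ ((n:ℝ)-1) * ((η - η/2) * s ^ (-γ))) := by
                rw [hcdef, show s ^ ((n:ℝ)-1) * ((η - η/2) * s ^ (-γ))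
                    = (η/2) * (s ^ ((n:ℝ)-1) * s ^ (-γ)) by ring, e]; ring
            _ ≤ Z * (s ^ ((n:ℝ)-1) * f s) := by
                apply mul_le_mul_of_nonneg_left _ hZ.le
                exact mul_le_mul_of_nonneg_left hf (Real.rpow_nonneg hs0.le _)
      set K := 2*((n:ℝ)-2) with hKdef
      have hK : 0 < K := by rw [hKdef]; linarith
      have hlog : ∀ᶠ r in 𝓝[>](0:ℝ),
          Real.log r ≤ (-K - G δ' + c*Real.log δ')/c :=
        Real.tendsto_log_nhdsGT_zero.eventually_le_atBot _
      obtain ⟨ρ₀, hρ₀, hρbd⟩ := ev_Ioo hlog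
      set ρ := min ρ₀ δ' / 2 with hρdef
      have hmin : 0 < min ρ₀ δ' := lt_min hρ₀ hδ'
      have hρ : 0 < ρ := by rw [hρdef]; positivity
      have hρρ₀ : ρ < ρ₀ := by
        have := min_le_left ρ₀ δ'; rw [hρdef]; linarith
      have hρδ' : ρ < δ' := by
        have := min_le_right ρ₀ δ'; rw [hρdef]; linarith
      have hGK : ∀ s ∈ Ioo (0:ℝ) ρ, G s ≤ -K := by
        intro s hs
        have h1 := hGlog s ⟨hs.1, lt_trans hs.2 hρδ'⟩
        have h2 := hρbd s ⟨hs.1, lt_trans hs.2 hρρ₀⟩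
        rw [le_div_iff₀ hcpos] at h2
        linarith [h2, h1]
      have hw'b : ∀ s ∈ Ioo (0:ℝ) ρ, deriv w s ≤ (-K) * s ^ (1-(n:ℝ)) := by
        intro s hs
        have hs0 : 0 < s := hs.1
        have hfs : 0 < f s := hpos s hs0
        have hβt : 0 < β * (s ^ (n:ℝ) * f s) :=
          mul_pos hβpos (mul_pos (Real.rpow_pos_of_pos hs0 _) hfs)
        have hG := hGK s hs
        have hGs : s ^ ((n:ℝ)-1) * deriv w s ≤ -K := by
          have e : s ^ ((n:ℝ)-1) * deriv w s = G s - β * (s ^ (n:ℝ) * f s) := by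
            simp only [hGdef]; ring
          rw [e]; linarith
        have hpow : (0:ℝ) < s ^ ((n:ℝ)-1) := Real.rpow_pos_of_pos hs0 _
        have h9 : deriv w s ≤ (-K) / s ^ ((n:ℝ)-1) :=
          (le_div_iff₀ hpow).2 (by linarith [hGs])
        calc deriv w s ≤ (-K) / s ^ ((n:ℝ)-1) := h9
          _ = (-K) * s ^ (1-(n:ℝ)) := by
              rw [show (1:ℝ)-(n:ℝ) = -((n:ℝ)-1) by ring, Real.rpow_neg hs0.le]; ring
      set ρ' := ρ/2 with hρ'def
      have hρ' : 0 < ρ' := by rw [hρ'def]; positivity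
      have hρ'ρ : ρ' < ρ := by rw [hρ'def]; linarith
      have hwρ' : 0 < w ρ' := hwpos ρ' hρ'
      have hp1n : (1:ℝ)-(n:ℝ) ≠ -1 := by
        intro h
        have h2 : (n:ℝ) = 2 := by linarith
        linarith
      have key : ∀ r ∈ Ioo (0:ℝ) ρ', 2 * r ^ (2-(n:ℝ)) - 2 * ρ' ^ (2-(n:ℝ)) ≤ w r := by
        intro r hr
        have h := deriv_upper (C := -K) (p := 1-(n:ℝ)) hp1n hr.1 hr.2.le
          (fun s hs => hwd s (lt_of_lt_of_le hr.1 hs.1))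
          (fun s hs => hw'b s ⟨lt_trans hr.1 hs.1, lt_trans hs.2 hρ'ρ⟩)
        have e2 : (1:ℝ)-(n:ℝ)+1 = 2-(n:ℝ) := by ring
        rw [e2] at h
        have e3 : (-K)/(2-(n:ℝ)) = 2 := by
          rw [hKdef, div_eq_iff (by linarith : (2:ℝ)-(n:ℝ) ≠ 0)]; ring
        rw [e3] at h
        linarith
      have hd : 0 < (n:ℝ)-2-μ := by rw [hμdef, ← hγn]; linarith [hnm, hγn ▸ hnm]
      have hev1 : ∀ᶠ r in 𝓝[>](0:ℝ), r ^ ((n:ℝ)-2) * (2 * ρ' ^ (2-(n:ℝ))) ≤ 1 := by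
        have h0 : Tendsto (fun r : ℝ => r ^ ((n:ℝ)-2) * (2 * ρ' ^ (2-(n:ℝ))))
            (𝓝[>](0:ℝ)) (𝓝 (0 * (2 * ρ' ^ (2-(n:ℝ))))) :=
          (tendsto_rpow_zero' (by linarith)).mul_const _
        rw [zero_mul] at h0
        exact h0.eventually (eventually_le_nhds one_pos)
      have hev2 : ∀ᶠ r in 𝓝[>](0:ℝ), r ^ μ * w r ≤ P + 1 :=
        hwlim.eventually (eventually_le_nhds (by linarith))
      have hev3 : ∀ᶠ r in 𝓝[>](0:ℝ), r ^ ((n:ℝ)-2-μ) ≤ 1/(2*(P+1)) :=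
        (tendsto_rpow_zero' hd).eventually (eventually_le_nhds (by positivity))
      obtain ⟨r, hrI, hr1, hr2, hr3⟩ :=
        ((eventually_mem_set.2 (Ioo_mem_nhdsGT hρ')).and (hev1.and (hev2.and hev3))).exists
      have hr0 : 0 < r := hrI.1
      have hrp : (0:ℝ) < r ^ ((n:ℝ)-2) := Real.rpow_pos_of_pos hr0 _
      have h1 := key r hrI
      have hlo2 : 1 ≤ r ^ ((n:ℝ)-2) * w r := by
        have h5 := mul_le_mul_of_nonneg_left h1 hrp.le
        have e : r ^ ((n:ℝ)-2) * r ^ (2-(n:ℝ)) = 1 := by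
          rw [← Real.rpow_add hr0]; norm_num
        have e4 : r ^ ((n:ℝ)-2) * (2 * r ^ (2-(n:ℝ)) - 2 * ρ' ^ (2-(n:ℝ)))
            = 2 * (r ^ ((n:ℝ)-2) * r ^ (2-(n:ℝ))) - r ^ ((n:ℝ)-2) * (2 * ρ' ^ (2-(n:ℝ))) := by
          ring
        rw [e4, e] at h5
        linarith
      have hup2 : r ^ ((n:ℝ)-2) * w r ≤ 1/2 := by
        have e : r ^ ((n:ℝ)-2) = r ^ ((n:ℝ)-2-μ) * r ^ μ := by
          rw [← Real.rpow_add hr0]; ring_nf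
        have hwr : 0 < w r := hwpos r hr0
        have h5 : (0:ℝ) < r ^ μ * w r := mul_pos (Real.rpow_pos_of_pos hr0 _) hwr
        calc r ^ ((n:ℝ)-2) * w r = r ^ ((n:ℝ)-2-μ) * (r ^ μ * w r) := by rw [e]; ring
          _ ≤ (1/(2*(P+1))) * (P+1) := mul_le_mul hr3 hr2 h5.le (by positivity)
          _ ≤ 1/2 := by
              have e9 : (1:ℝ)/(2*(P+1))*(P+1) = 1/2 := by field_simp
              rw [e9]
      linarith
    · -- γ > n
      have hγn' : 0 < γ - (n:ℝ) := by linarith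
      have hμlt : μ < γ - 2 := by
        have h1 : (n:ℝ)*(1-m) < γ*(1-m) := by nlinarith
        rw [hμdef]; nlinarith
      have hGsq : Tendsto (fun r => r ^ (γ-(n:ℝ)) * G r) (𝓝[>](0:ℝ))
          (𝓝 (Z*η/((n:ℝ)-γ))) := by
        rw [Metric.tendsto_nhdsWithin_nhds]
        intro ε hε
        set ε' := min (η/2) ((γ-(n:ℝ))*ε/(4*Z)) with hε'def
        have hε'pos : 0 < ε' := lt_min (by linarith)
          (div_pos (mul_pos hγn' hε) (by nlinarith [hZ]))
        have hε'η : ε' < η := lt_of_le_of_lt (min_le_left _ _) (by linarith)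
        have hε'b : Z*ε'/(γ-(n:ℝ)) ≤ ε/4 := by
          have h1 : ε' ≤ (γ-(n:ℝ))*ε/(4*Z) := min_le_right _ _
          rw [div_le_iff₀ hγn']
          calc Z*ε' ≤ Z*((γ-(n:ℝ))*ε/(4*Z)) := by nlinarith
            _ = (γ-(n:ℝ))*ε/4 := by field_simp
            _ = ε/4*(γ-(n:ℝ)) := by ring
        obtain ⟨δε, hδε, hfbε⟩ := hfb ε' hε'pos
        set δ' := δε/2 with hδ'def
        have hδ' : 0 < δ' := by rw [hδ'def]; positivity
        have hδ'δε : δ' < δε := by rw [hδ'def]; linarith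
        set A := Z*(η-ε')/((n:ℝ)-γ) with hAdef
        set B := Z*(η+ε')/((n:ℝ)-γ) with hBdef
        set CA := |G δ' - A * δ' ^ ((n:ℝ)-γ)| + |G δ' - B * δ' ^ ((n:ℝ)-γ)| with hCAdef
        have hCA : 0 ≤ CA := by rw [hCAdef]; positivity
        have hsm : ∀ᶠ r in 𝓝[>](0:ℝ), r ^ (γ-(n:ℝ)) * CA < ε/2 := by
          have h0 : Tendsto (fun r : ℝ => r ^ (γ-(n:ℝ)) * CA) (𝓝[>](0:ℝ)) (𝓝 (0*CA)) :=
            (tendsto_rpow_zero' hγn').mul_const _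
          rw [zero_mul] at h0
          exact h0.eventually (eventually_lt_nhds (by linarith))
        obtain ⟨δ'', hδ'', hsm'⟩ := ev_Ioo hsm
        refine ⟨min δ'' δ', lt_min hδ'' hδ', ?_⟩
        intro x hx hdist
        have hx0 : (0:ℝ) < x := hx
        rw [Real.dist_eq, sub_zero, abs_of_pos hx0] at hdist
        have hxδ'' : x < δ'' := lt_of_lt_of_le hdist (min_le_left _ _)
        have hxδ' : x < δ' := lt_of_lt_of_le hdist (min_le_right _ _)
        have hstep := Gest hZ (by linarith) hGd hfbε hx0 hxδ'.le hδ'δε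
        rw [← hAdef, ← hBdef] at hstep
        have hxp : (0:ℝ) < x ^ (γ-(n:ℝ)) := Real.rpow_pos_of_pos hx0 _
        have e : x ^ (γ-(n:ℝ)) * x ^ ((n:ℝ)-γ) = 1 := by
          rw [← Real.rpow_add hx0]; norm_num
        have hsm2 := hsm' x ⟨hx0, hxδ''⟩
        -- bounds on x^{γ-n} * G x
        have hub : x ^ (γ-(n:ℝ)) * G x ≤ x ^ (γ-(n:ℝ)) * (G δ' - A * δ' ^ ((n:ℝ)-γ)) + A := by
          have h7 : G x ≤ G δ' - A * δ' ^ ((n:ℝ)-γ) + A * x ^ ((n:ℝ)-γ) := by linarith [hstep.1]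
          have h8 := mul_le_mul_of_nonneg_left h7 hxp.le
          calc x ^ (γ-(n:ℝ)) * G x
              ≤ x ^ (γ-(n:ℝ)) * (G δ' - A * δ' ^ ((n:ℝ)-γ) + A * x ^ ((n:ℝ)-γ)) := h8
            _ = x ^ (γ-(n:ℝ)) * (G δ' - A * δ' ^ ((n:ℝ)-γ))
                + A * (x ^ (γ-(n:ℝ)) * x ^ ((n:ℝ)-γ)) := by ring
            _ = x ^ (γ-(n:ℝ)) * (G δ' - A * δ' ^ ((n:ℝ)-γ)) + A := by rw [e, mul_one]
        have hlb2 : x ^ (γ-(n:ℝ)) * (G δ' - B * δ' ^ ((n:ℝ)-γ)) + B ≤ x ^ (γ-(n:ℝ)) * G x := by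
          have h7 : G δ' - B * δ' ^ ((n:ℝ)-γ) + B * x ^ ((n:ℝ)-γ) ≤ G x := by linarith [hstep.2]
          have h8 := mul_le_mul_of_nonneg_left h7 hxp.le
          calc x ^ (γ-(n:ℝ)) * (G δ' - B * δ' ^ ((n:ℝ)-γ)) + B
              = x ^ (γ-(n:ℝ)) * (G δ' - B * δ' ^ ((n:ℝ)-γ))
                + B * (x ^ (γ-(n:ℝ)) * x ^ ((n:ℝ)-γ)) := by rw [e, mul_one]
            _ = x ^ (γ-(n:ℝ)) * (G δ' - B * δ' ^ ((n:ℝ)-γ) + B * x ^ ((n:ℝ)-γ)) := by ring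
            _ ≤ x ^ (γ-(n:ℝ)) * G x := h8
        have habs1 : |x ^ (γ-(n:ℝ)) * (G δ' - A * δ' ^ ((n:ℝ)-γ))| ≤ x ^ (γ-(n:ℝ)) * CA := by
          rw [abs_mul, abs_of_pos hxp]
          apply mul_le_mul_of_nonneg_left _ hxp.le
          rw [hCAdef]
          exact le_add_of_nonneg_right (abs_nonneg _)
        have habs2 : |x ^ (γ-(n:ℝ)) * (G δ' - B * δ' ^ ((n:ℝ)-γ))| ≤ x ^ (γ-(n:ℝ)) * CA := by
          rw [abs_mul, abs_of_pos hxp]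
          apply mul_le_mul_of_nonneg_left _ hxp.le
          rw [hCAdef]
          exact le_add_of_nonneg_left (abs_nonneg _)
        have hne1 : (n:ℝ) - γ ≠ 0 := ne_of_lt (by linarith)
        have hne2 : γ - (n:ℝ) ≠ 0 := ne_of_gt hγn'
        have eA : A - Z*η/((n:ℝ)-γ) = Z*ε'/(γ-(n:ℝ)) := by
          rw [hAdef]; field_simp; ring
        have eB : Z*η/((n:ℝ)-γ) - B = Z*ε'/(γ-(n:ℝ)) := by
          rw [hBdef]; field_simp; ring
        rw [Real.dist_eq, abs_lt]
        have h10 := neg_abs_le (x ^ (γ-(n:ℝ)) * (G δ' - B * δ' ^ ((n:ℝ)-γ)))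
        have h11 := le_abs_self (x ^ (γ-(n:ℝ)) * (G δ' - A * δ' ^ ((n:ℝ)-γ)))
        set TA := x ^ (γ-(n:ℝ)) * (G δ' - A * δ' ^ ((n:ℝ)-γ)) with hTAdef
        set TB := x ^ (γ-(n:ℝ)) * (G δ' - B * δ' ^ ((n:ℝ)-γ)) with hTBdef
        set S := x ^ (γ-(n:ℝ)) * G x with hSdef
        set U := x ^ (γ-(n:ℝ)) * CA with hUdef
        set V := Z*η/((n:ℝ)-γ) with hVdef
        set Wt := Z*ε'/(γ-(n:ℝ)) with hWtdef
        constructor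
        · linarith
        · linarith
      have hdw : Tendsto (fun r => r ^ (γ-1) * deriv w r) (𝓝[>](0:ℝ))
          (𝓝 (Z*η/((n:ℝ)-γ) - β*η)) := by
        have h := hGsq.sub ((hlim.const_mul β))
        apply h.congr'
        filter_upwards [self_mem_nhdsWithin] with x (hx : 0 < x)
        have e1 : x ^ (γ-(n:ℝ)) * x ^ ((n:ℝ)-1) = x ^ (γ-1) := by
          rw [← Real.rpow_add hx]; ring_nf
        have e2 : x ^ (γ-(n:ℝ)) * x ^ ((n:ℝ)) = x ^ γ := by
          rw [← Real.rpow_add hx]; ring_nf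
        simp only [hGdef]
        linear_combination (deriv w x) * e1 + β * f x * e2
      obtain ⟨δ₀, hδ₀, hfb0⟩ := hfb (η/2) (by linarith)
      exact lemA hδ₀ hμ hP (fun r hr => hwpos r hr.1) (fun r hr => hwd r hr.1) hwlim hdw
        hμγ (hct hγn.ne')
  refine ⟨?_, hkey⟩
  rw [hαβ]
  apply div_neg_of_neg_of_pos <;> linarith
end

section
/- Let γ ∈ ℝ, η > 0, ε > 0 and α, β ∈ ℝ, and let n ≥ 3 be an integer and 0 < m < (n-2)/n. Let f be a radially symmetric solution of Δ(f^m/m) + αf + βx·∇f = 0, f > 0, in B_ε \ {0} ⊂ ℝ^n satisfying lim_{r→0⁺} r^γ f(r) = η. Define q(r) = r f'(r)/f(r) for 0 < r < ε. Then there exists a strictly decreasing sequence (r_i)_{i=1}^∞ ⊂ (0, ε) with r_i → 0 as i → ∞ such that lim_{i→∞} q(r_i) = −γ. -/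
open Set Filter

/-- **Lemma 2.1.** Let `γ ∈ ℝ`, `η > 0`, `ε > 0`, `α, β ∈ ℝ`, `n ≥ 3`, `0 < m < (n-2)/n`.
Let `f` be a radially symmetric solution of `Δ(f^m/m) + αf + βx·∇f = 0`, `f > 0`, in
`B_ε \ {0} ⊆ ℝⁿ` with `lim_{r→0⁺} r^γ f(r) = η`, and let `q(r) = r f'(r)/f(r)`. Then there
is a strictly decreasing sequence `(rᵢ) ⊆ (0, ε)` with `rᵢ → 0` and `q(rᵢ) → −γ`. -/
theorem stmt_7 (n : ℕ) (hn : 3 ≤ n) (m γ η ε α β : ℝ)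
    (hm0 : 0 < m) (hm1 : m < ((n : ℝ) - 2) / n)
    (hη : 0 < η) (hε : 0 < ε)
    (f : ℝ → ℝ)
    (hpos : ∀ r ∈ Ioo (0 : ℝ) ε, 0 < f r)
    (hreg : ContDiffOn ℝ 2 f (Ioo (0 : ℝ) ε))
    (hode : ∀ r ∈ Ioo (0 : ℝ) ε,
      deriv (deriv (fun s => f s ^ m / m)) r
        + ((n : ℝ) - 1) / r * deriv (fun s => f s ^ m / m) r
        + α * f r + β * r * deriv f r = 0)
    (hlim : Tendsto (fun r => r ^ γ * f r) (nhdsWithin 0 (Ioi 0)) (nhds η))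
    (q : ℝ → ℝ) (hq : ∀ r ∈ Ioo (0 : ℝ) ε, q r = r * deriv f r / f r) :
    ∃ r : ℕ → ℝ, StrictAnti r ∧ (∀ i, r i ∈ Ioo (0 : ℝ) ε) ∧
      Tendsto r atTop (nhds 0) ∧
      Tendsto (fun i => q (r i)) atTop (nhds (-γ)) := by
  have hε2 : 0 < ε / 2 := by linarith
  -- dyadic sequence
  set b : ℕ → ℝ := fun i => (ε / 2) * (1/2 : ℝ) ^ i with hbdef
  have hbpos : ∀ i, 0 < b i := fun i => by positivity
  have hbmem : ∀ i, b i ∈ Ioo (0 : ℝ) ε := by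
    intro i
    refine ⟨hbpos i, ?_⟩
    have h1 : (1/2 : ℝ) ^ i ≤ 1 := pow_le_one₀ (by norm_num) (by norm_num)
    have h2 : (0:ℝ) < (1/2 : ℝ) ^ i := by positivity
    simp only [hbdef]
    nlinarith
  have hbsucc : ∀ i, b i - b (i + 1) = b (i + 1) := by
    intro i
    simp only [hbdef, pow_succ]
    ring
  have hbtend : Tendsto b atTop (nhds 0) := by
    have := tendsto_pow_atTop_nhds_zero_of_lt_one (by norm_num : (0:ℝ) ≤ 1/2)
      (by norm_num : (1/2:ℝ) < 1)
    have h := this.const_mul (ε / 2)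
    rw [mul_zero] at h
    exact h
  have hbtend' : Tendsto b atTop (nhdsWithin 0 (Ioi 0)) :=
    tendsto_nhdsWithin_of_tendsto_nhds_of_eventually_within b hbtend
      (Eventually.of_forall fun i => hbpos i)
  -- g = γ log r + log f r
  set g : ℝ → ℝ := fun r => γ * Real.log r + Real.log (f r) with hgdef
  have hfdiff : ∀ x ∈ Ioo (0 : ℝ) ε, DifferentiableAt ℝ f x := by
    intro x hx
    exact (hreg.differentiableOn (by norm_num)).differentiableAt
      (isOpen_Ioo.mem_nhds hx)
  have hgd : ∀ x ∈ Ioo (0 : ℝ) ε, HasDerivAt g (γ / x + deriv f x / f x) x := by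
    intro x hx
    have hx0 : x ≠ 0 := ne_of_gt hx.1
    have h1 : HasDerivAt (fun r => γ * Real.log r) (γ * x⁻¹) x :=
      (Real.hasDerivAt_log hx0).const_mul γ
    have hf : HasDerivAt f (deriv f x) x := (hfdiff x hx).hasDerivAt
    have h2 : HasDerivAt (fun r => Real.log (f r)) ((f x)⁻¹ * deriv f x) x :=
      (Real.hasDerivAt_log (ne_of_gt (hpos x hx))).comp x hf
    have := h1.add h2
    rw [show g = ((fun r => γ * Real.log r) + fun r => Real.log (f r)) from rfl]
    simpa [div_eq_mul_inv, mul_comm] using this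
  -- limit of g
  have hglim : Tendsto g (nhdsWithin 0 (Ioi 0)) (nhds (Real.log η)) := by
    have h1 : Tendsto (fun r => Real.log (r ^ γ * f r)) (nhdsWithin 0 (Ioi 0))
        (nhds (Real.log η)) := ((Real.continuousAt_log (ne_of_gt hη)).tendsto.comp hlim)
    refine h1.congr' ?_
    filter_upwards [Ioo_mem_nhdsGT_of_mem (by simp [hε] : (0:ℝ) ∈ Ico (0:ℝ) ε)] with r hr
    have hr0 : 0 < r := hr.1
    have hfr : 0 < f r := hpos r hr
    rw [Real.log_mul (by positivity) (ne_of_gt hfr), Real.log_rpow hr0]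
  -- MVT on [b (i+1), b i]
  have hex : ∀ i, ∃ c ∈ Ioo (b (i + 1)) (b i),
      γ / c + deriv f c / f c = (g (b i) - g (b (i + 1))) / (b i - b (i + 1)) := by
    intro i
    have hlt : b (i + 1) < b i := by
      have := hbsucc i
      have := hbpos (i + 1)
      linarith
    have hsub : Icc (b (i + 1)) (b i) ⊆ Ioo (0 : ℝ) ε := by
      intro x hx
      exact ⟨lt_of_lt_of_le (hbpos (i+1)) hx.1, lt_of_le_of_lt hx.2 (hbmem i).2⟩
    exact exists_hasDerivAt_eq_slope g (fun x => γ / x + deriv f x / f x) hlt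
      (fun x hx => ((hgd x (hsub hx)).continuousAt).continuousWithinAt)
      (fun x hx => hgd x (hsub (Ioo_subset_Icc_self hx)))
  choose r hr1 hr2 using hex
  have hrmem : ∀ i, r i ∈ Ioo (0 : ℝ) ε := fun i =>
    ⟨lt_trans (hbpos (i + 1)) (hr1 i).1, lt_trans (hr1 i).2 (hbmem i).2⟩
  refine ⟨r, ?_, hrmem, ?_, ?_⟩
  · refine strictAnti_nat_of_succ_lt fun i => ?_
    exact lt_trans (hr1 (i + 1)).2 (hr1 i).1
  · refine squeeze_zero (fun i => le_of_lt (hrmem i).1) (fun i => le_of_lt (hr1 i).2) hbtend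
  · -- main estimate
    have key : ∀ i, q (r i) + γ = (r i / b (i + 1)) * (g (b i) - g (b (i + 1))) := by
      intro i
      have hri : r i ≠ 0 := ne_of_gt (hrmem i).1
      have hfi : f (r i) ≠ 0 := ne_of_gt (hpos _ (hrmem i))
      have hb1 : b (i + 1) ≠ 0 := ne_of_gt (hbpos (i + 1))
      have h := hr2 i
      rw [hbsucc i] at h
      have e1 : q (r i) + γ = r i * (γ / r i + deriv f (r i) / f (r i)) := by
        rw [hq _ (hrmem i)]
        field_simp
        ring
      rw [e1, h]
      ring
    have hΔ : Tendsto (fun i => g (b i) - g (b (i + 1))) atTop (nhds 0) := by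
      have h1 : Tendsto (fun i => g (b i)) atTop (nhds (Real.log η)) :=
        hglim.comp hbtend'
      have h2 : Tendsto (fun i => g (b (i + 1))) atTop (nhds (Real.log η)) :=
        h1.comp (tendsto_add_atTop_nat 1)
      simpa using h1.sub h2
    have hbound : ∀ i, |q (r i) + γ| ≤ 2 * |g (b i) - g (b (i + 1))| := by
      intro i
      rw [key i, abs_mul]
      have hratio : |r i / b (i + 1)| ≤ 2 := by
        have h1 : 0 < b (i + 1) := hbpos (i + 1)
        have h2 : r i < b i := (hr1 i).2
        have h3 : b i = 2 * b (i + 1) := by have := hbsucc i; linarith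
        rw [abs_of_pos (div_pos (hrmem i).1 h1), div_le_iff₀ h1]
        linarith
      exact mul_le_mul_of_nonneg_right hratio (abs_nonneg _)
    have hzero : Tendsto (fun i => q (r i) + γ) atTop (nhds 0) := by
      have h2 : Tendsto (fun i => 2 * |g (b i) - g (b (i + 1))|) atTop (nhds 0) := by
        simpa using (hΔ.abs).const_mul 2
      exact squeeze_zero_norm (fun i => by simpa using hbound i) h2
    have := hzero.sub_const γ
    simpa using this
end

section
/- Let n ≥ 3 be an integer, 0 < m < (n-2)/n, α, β ∈ ℝ and ε > 0. Let f be a radially symmetric solution of Δ(f^m/m) + αf + βx·∇f = 0, f > 0, in B_ε \ {0} ⊂ ℝ^n. Define q(r) = r f'(r)/f(r) and F(r) = exp(−β ∫_r^{ε/2} ρ f(ρ)^{1-m} dρ) for 0 < r < ε/2. Then for all 0 < r < ε/2, r^{n-2} F(r) q(r) = (ε/2)^{n-2} q(ε/2) + ∫_r^{ε/2} (α ρ^{n-1} f(ρ)^{1-m} + m ρ^{n-3} q(ρ)²) F(ρ) dρ. -/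
open Set Filter

lemma key_alg (ν mm αα ββ t ft ft' ft'' A P X : ℝ) (ht : t ≠ 0) (hft : ft ≠ 0) (hP : P ≠ 0)
    (h1 : ft ^ (mm-1) = P / ft)
    (h2 : ft ^ (mm-1-1) = P / ft / ft)
    (h3 : ft ^ (1-mm) = ft / P)
    (h4 : t ^ (ν-2) = A * t)
    (h5 : t ^ (ν-2-1) = A)
    (h6 : t ^ (ν-1) = A * t * t)
    (h7 : t ^ (ν-3) = A)
    (hE : (mm-1) * ft ^ (mm-1-1) * ft' * ft' + ft ^ (mm-1) * ft''
        + (ν-1)/t * (ft ^ (mm-1) * ft') + αα * ft + ββ * t * ft' = 0) :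
    ((ν-2) * t ^ (ν-2-1) * X + t ^ (ν-2) * (X * (-ββ * -(t * ft ^ (1-mm))))) * (t * ft' / ft)
      + (t ^ (ν-2) * X) * (((1 * ft' + t * ft'') * ft - t * ft' * ft') / ft ^ 2)
      = -((αα * t ^ (ν-1) * ft ^ (1-mm) + mm * t ^ (ν-3) * (t * ft' / ft) ^ 2) * X) := by
  rw [h1, h2, h3, h4, h5, h6, h7] at *
  field_simp at hE ⊢
  linear_combination (A * X) * hE

/-- **Integral identity (2.5).** -/
theorem stmt_9 (n : ℕ) (hn : 3 ≤ n) (m α β ε : ℝ)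
    (hm0 : 0 < m) (hm1 : m < ((n : ℝ) - 2) / n) (hε : 0 < ε)
    (f : ℝ → ℝ)
    (hpos : ∀ r ∈ Ioo (0 : ℝ) ε, 0 < f r)
    (hreg : ContDiffOn ℝ 2 f (Ioo (0 : ℝ) ε))
    (hode : ∀ r ∈ Ioo (0 : ℝ) ε,
      deriv (deriv (fun s => f s ^ m / m)) r
        + ((n : ℝ) - 1) / r * deriv (fun s => f s ^ m / m) r
        + α * f r + β * r * deriv f r = 0)
    (q : ℝ → ℝ) (hq : ∀ r, q r = r * deriv f r / f r)
    (F : ℝ → ℝ)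
    (hF : ∀ r, F r = Real.exp (-β * ∫ ρ in r..(ε / 2), ρ * f ρ ^ (1 - m))) :
    ∀ r ∈ Ioo (0 : ℝ) (ε / 2),
      r ^ ((n : ℝ) - 2) * F r * q r
        = (ε / 2) ^ ((n : ℝ) - 2) * q (ε / 2)
          + ∫ ρ in r..(ε / 2),
              (α * ρ ^ ((n : ℝ) - 1) * f ρ ^ (1 - m)
                + m * ρ ^ ((n : ℝ) - 3) * q ρ ^ 2) * F ρ := by
  intro r hr
  have hm : m ≠ 0 := hm0.ne'
  have hIo : IsOpen (Ioo (0:ℝ) ε) := isOpen_Ioo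
  have hεI : ε/2 ∈ Ioo (0:ℝ) ε := ⟨by linarith, by linarith⟩
  have hrI : r ∈ Ioo (0:ℝ) ε := ⟨hr.1, by linarith [hr.2]⟩
  -- regularity facts
  have hfc : ContinuousOn f (Ioo (0:ℝ) ε) := hreg.continuousOn
  have hf1 : ∀ t ∈ Ioo (0:ℝ) ε, HasDerivAt f (deriv f t) t := fun t ht =>
    ((hreg.differentiableOn (by norm_num)).differentiableAt (hIo.mem_nhds ht)).hasDerivAt
  have hderiv1 : ContDiffOn ℝ 1 (deriv f) (Ioo (0:ℝ) ε) :=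
    hreg.deriv_of_isOpen hIo (by norm_num)
  have hf'c : ContinuousOn (deriv f) (Ioo (0:ℝ) ε) := hderiv1.continuousOn
  have hf2 : ∀ t ∈ Ioo (0:ℝ) ε, HasDerivAt (deriv f) (deriv (deriv f) t) t := fun t ht =>
    ((hderiv1.differentiableOn (by norm_num)).differentiableAt (hIo.mem_nhds ht)).hasDerivAt
  -- the integrand of F
  set g : ℝ → ℝ := fun ρ => ρ * f ρ ^ (1 - m) with hgdef
  have hgc : ContinuousOn g (Ioo (0:ℝ) ε) :=
    continuousOn_id.mul (hfc.rpow_const fun t ht => Or.inl (hpos t ht).ne')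
  -- derivative of Φ
  set Φ : ℝ → ℝ := fun u => ∫ ρ in u..(ε/2), g ρ with hΦdef
  have hΦ : ∀ t ∈ Ioo (0:ℝ) ε, HasDerivAt Φ (-(g t)) t := by
    intro t ht
    have hsub : uIcc t (ε/2) ⊆ Ioo (0:ℝ) ε :=
      (Set.ordConnected_Ioo).uIcc_subset ht hεI
    exact intervalIntegral.integral_hasDerivAt_left
      ((hgc.mono hsub).intervalIntegrable)
      (hgc.stronglyMeasurableAtFilter hIo t ht)
      (hgc.continuousAt (hIo.mem_nhds ht))
  -- explicit versions of F and q
  set X : ℝ → ℝ := fun u => Real.exp (-β * Φ u) with hXdef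
  have hFX : F = X := funext hF
  set Q : ℝ → ℝ := fun s => s * deriv f s / f s with hQdef
  have hqQ : q = Q := funext hq
  have hXder : ∀ t ∈ Ioo (0:ℝ) ε, HasDerivAt X (X t * (-β * -(g t))) t := fun t ht =>
    ((hΦ t ht).const_mul (-β)).exp
  have hXc : ContinuousOn X (Ioo (0:ℝ) ε) := fun t ht =>
    ((hXder t ht).continuousAt).continuousWithinAt
  have hQc : ContinuousOn Q (Ioo (0:ℝ) ε) :=
    (continuousOn_id.mul hf'c).div hfc fun t ht => (hpos t ht).ne'
  -- the ODE rewritten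
  have hw : ∀ s ∈ Ioo (0:ℝ) ε,
      HasDerivAt (fun s => f s ^ m / m) (f s ^ (m-1) * deriv f s) s := by
    intro s hs
    have h1 := ((hf1 s hs).rpow_const (p := m) (Or.inl (hpos s hs).ne')).div_const m
    refine h1.congr_deriv ?_
    field_simp
  -- derivative of G and its identification
  set G : ℝ → ℝ := fun s => s ^ ((n:ℝ)-2) * X s * Q s with hGdef
  set Ψ : ℝ → ℝ := fun ρ =>
      (α * ρ ^ ((n:ℝ)-1) * f ρ ^ (1-m) + m * ρ ^ ((n:ℝ)-3) * Q ρ ^ 2) * X ρ with hΨdef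
  have hGder : ∀ t ∈ Ioo (0:ℝ) ε, HasDerivAt G (-(Ψ t)) t := by
    intro t ht
    have ht0 : (0:ℝ) < t := ht.1
    have hft : 0 < f t := hpos t ht
    -- raw derivative
    have hp1 : HasDerivAt (fun s : ℝ => s ^ ((n:ℝ)-2))
        (((n:ℝ)-2) * t ^ ((n:ℝ)-2-1)) t :=
      Real.hasDerivAt_rpow_const (Or.inl ht0.ne')
    have hqd : HasDerivAt Q
        (((1 * deriv f t + t * deriv (deriv f) t) * f t - t * deriv f t * deriv f t) / f t ^ 2)
        t := ((hasDerivAt_id t).mul (hf2 t ht)).div (hf1 t ht) hft.ne'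
    have hraw : HasDerivAt G
        (((((n:ℝ)-2) * t ^ ((n:ℝ)-2-1)) * X t + t ^ ((n:ℝ)-2) * (X t * (-β * -(g t)))) * Q t
          + (t ^ ((n:ℝ)-2) * X t) *
            (((1 * deriv f t + t * deriv (deriv f) t) * f t - t * deriv f t * deriv f t) / f t ^ 2))
        t := (hp1.mul (hXder t ht)).mul hqd
    -- the ODE at t
    have hw1 : deriv (fun s => f s ^ m / m) t = f t ^ (m-1) * deriv f t := (hw t ht).deriv
    have hw2 : deriv (deriv (fun s => f s ^ m / m)) t
        = (m-1) * f t ^ (m-1-1) * deriv f t * deriv f t + f t ^ (m-1) * deriv (deriv f) t := by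
      have heq : deriv (fun s => f s ^ m / m) =ᶠ[nhds t]
          (fun s => f s ^ (m-1) * deriv f s) := by
        filter_upwards [hIo.mem_nhds ht] with s hs using (hw s hs).deriv
      rw [heq.deriv_eq]
      have h2 := (((hf1 t ht).rpow_const (p := m-1) (Or.inl hft.ne')).mul (hf2 t ht)).deriv
      rw [show (fun s => f s ^ (m-1) * deriv f s) = (fun y => f y ^ (m-1)) * deriv f from rfl, h2]; ring
    have hE := hode t ht
    rw [hw1, hw2] at hE
    -- identify the derivative value
    have hval :
        ((((n:ℝ)-2) * t ^ ((n:ℝ)-2-1)) * X t + t ^ ((n:ℝ)-2) * (X t * (-β * -(g t)))) * Q t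
          + (t ^ ((n:ℝ)-2) * X t) *
            (((1 * deriv f t + t * deriv (deriv f) t) * f t - t * deriv f t * deriv f t) / f t ^ 2)
        = -(Ψ t) := by
      have hP : 0 < f t ^ m := Real.rpow_pos_of_pos hft m
      simp only [hΨdef, hQdef, hgdef]
      exact key_alg ((n:ℝ)) m α β t (f t) (deriv f t) (deriv (deriv f) t)
        (t ^ ((n:ℝ)-3)) (f t ^ m) (X t) ht0.ne' hft.ne' hP.ne'
        (by rw [Real.rpow_sub hft, Real.rpow_one])
        (by rw [show m-1-1 = m-1-1 from rfl, Real.rpow_sub hft, Real.rpow_sub hft, Real.rpow_one])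
        (by rw [Real.rpow_sub hft, Real.rpow_one])
        (by rw [show (n:ℝ)-2 = ((n:ℝ)-3)+1 by ring, Real.rpow_add ht0, Real.rpow_one])
        (by rw [show (n:ℝ)-2-1 = (n:ℝ)-3 by ring])
        (by rw [show (n:ℝ)-1 = ((n:ℝ)-3)+1+1 by ring, Real.rpow_add ht0, Real.rpow_add ht0,
              Real.rpow_one])
        rfl hE
    rw [hval] at hraw
    exact hraw
  -- continuity of Ψ on the interval
  have hΨc : ContinuousOn Ψ (Ioo (0:ℝ) ε) := by
    have hrp : ∀ c : ℝ, ContinuousOn (fun ρ : ℝ => ρ ^ c) (Ioo (0:ℝ) ε) := fun c t ht =>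
      (Real.continuousAt_rpow_const t c (Or.inl (ne_of_gt ht.1))).continuousWithinAt
    exact (((continuousOn_const.mul (hrp _)).mul
        (hfc.rpow_const fun t ht => Or.inl (hpos t ht).ne')).add
        ((continuousOn_const.mul (hrp _)).mul (hQc.pow 2))).mul hXc
  -- FTC
  have hsub : uIcc r (ε/2) ⊆ Ioo (0:ℝ) ε :=
    (Set.ordConnected_Ioo).uIcc_subset hrI hεI
  have hFTC : ∫ ρ in r..(ε/2), -(Ψ ρ) = G (ε/2) - G r :=
    intervalIntegral.integral_eq_sub_of_hasDerivAt
      (fun t ht => hGder t (hsub ht))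
      ((hΨc.mono hsub).neg.intervalIntegrable)
  rw [intervalIntegral.integral_neg] at hFTC
  have hX2 : X (ε/2) = 1 := by
    simp [hXdef, hΦdef, intervalIntegral.integral_same]
  have hGr : G r = r ^ ((n:ℝ)-2) * F r * q r := by rw [hFX, hqQ]
  have hGε : G (ε/2) = (ε/2) ^ ((n:ℝ)-2) * q (ε/2) := by
    rw [hqQ]; simp [hGdef, hX2]
  have hint : (∫ ρ in r..(ε/2),
      (α * ρ ^ ((n:ℝ)-1) * f ρ ^ (1-m) + m * ρ ^ ((n:ℝ)-3) * q ρ ^ 2) * F ρ)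
      = ∫ ρ in r..(ε/2), Ψ ρ := by
    rw [hFX, hqQ]
  rw [hint, ← hGr, ← hGε]
  linarith [hFTC]
end

section
/- Let n ≥ 3 be an integer, 0 < m < 1, β < 0, γ > 2/(1-m), η > 0 and ε > 0. Let f : (0, ε) → ℝ be positive and continuous, and suppose there exists 0 < r₀ < ε/2 such that f(r) ≥ (η/2) r^{-γ} for all 0 < r ≤ r₀. Define F(r) = exp(−β ∫_r^{ε/2} ρ f(ρ)^{1-m} dρ) for 0 < r < ε/2. Then F(r) ≥ F(r₀) exp( (η/2)^{1-m} |β| (r^{2−γ(1-m)} − r₀^{2−γ(1-m)})/(γ(1-m) − 2) ) for all 0 < r < r₀, and consequently r^{n-2} F(r) → ∞ as r → 0⁺. -/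
open Set Filter

/-- **Estimate (2.9)–(2.11), case `β < 0`, `γ > 2/(1-m)`.** Let `n ≥ 3`, `0 < m < 1`,
`β < 0`, `γ > 2/(1-m)`, `η > 0`, `ε > 0`. Let `f : (0, ε) → ℝ` be positive and continuous
with `f(r) ≥ (η/2) r^{-γ}` for `0 < r ≤ r₀`, where `0 < r₀ < ε/2`. With
`F(r) = exp(−β ∫_r^{ε/2} ρ f(ρ)^{1-m} dρ)`, one has
`F(r) ≥ F(r₀) exp((η/2)^{1-m} |β| (r^{2−γ(1-m)} − r₀^{2−γ(1-m)})/(γ(1-m)−2))` for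
`0 < r < r₀`, and `r^{n-2} F(r) → ∞` as `r → 0⁺`. -/
theorem stmt_11 (n : ℕ) (hn : 3 ≤ n) (m β γ η ε r₀ : ℝ)
    (hm0 : 0 < m) (hm1 : m < 1) (hβ : β < 0) (hγ : γ > 2 / (1 - m))
    (hη : 0 < η) (hε : 0 < ε) (hr₀0 : 0 < r₀) (hr₀ : r₀ < ε / 2)
    (f : ℝ → ℝ)
    (hpos : ∀ r ∈ Ioo (0 : ℝ) ε, 0 < f r)
    (hcont : ContinuousOn f (Ioo (0 : ℝ) ε))
    (hlower : ∀ r ∈ Ioc (0 : ℝ) r₀, η / 2 * r ^ (-γ) ≤ f r)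
    (F : ℝ → ℝ)
    (hF : ∀ r, F r = Real.exp (-β * ∫ ρ in r..(ε / 2), ρ * f ρ ^ (1 - m))) :
    (∀ r ∈ Ioo (0 : ℝ) r₀,
      F r₀ * Real.exp ((η / 2) ^ (1 - m) * |β|
        * (r ^ (2 - γ * (1 - m)) - r₀ ^ (2 - γ * (1 - m))) / (γ * (1 - m) - 2))
        ≤ F r) ∧
    Tendsto (fun r => r ^ ((n : ℝ) - 2) * F r) (nhdsWithin 0 (Ioi 0)) atTop := by
  have hm' : 0 < 1 - m := by linarith
  set k := γ * (1 - m) with hkdef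
  have hk2 : 2 < k := by
    have := (div_lt_iff₀ hm').mp hγ
    linarith
  have hεhalf : ε / 2 < ε := by linarith
  set c : ℝ := (η / 2) ^ (1 - m) with hcdef
  have hc0 : 0 < c := Real.rpow_pos_of_pos (by linarith) _
  have habs : |β| = -β := abs_of_neg hβ
  have hβ0 : (0:ℝ) < -β := by linarith
  set g : ℝ → ℝ := fun ρ => ρ * f ρ ^ (1 - m) with hgdef
  have hinteg : ∀ a b : ℝ, 0 < a → a ≤ b → b < ε →
      IntervalIntegrable g MeasureTheory.volume a b := by
    intro a b ha hab hb
    apply ContinuousOn.intervalIntegrable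
    have hsub : uIcc a b ⊆ Ioo 0 ε := by
      rw [uIcc_of_le hab]
      intro x hx
      exact ⟨lt_of_lt_of_le ha hx.1, lt_of_le_of_lt hx.2 hb⟩
    exact (continuous_id.continuousOn).mul
      ((hcont.mono hsub).rpow_const (fun x hx => Or.inl (ne_of_gt (hpos x (hsub hx)))))
  have key : ∀ r ∈ Ioo (0 : ℝ) r₀,
      F r₀ * Real.exp (c * |β| * (r ^ (2 - k) - r₀ ^ (2 - k)) / (k - 2)) ≤ F r := by
    intro r hr
    obtain ⟨hr0, hrr₀⟩ := hr
    have h1 : IntervalIntegrable g MeasureTheory.volume r r₀ :=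
      hinteg r r₀ hr0 hrr₀.le (by linarith)
    have h2 : IntervalIntegrable g MeasureTheory.volume r₀ (ε / 2) :=
      hinteg r₀ (ε / 2) hr₀0 hr₀.le hεhalf
    have hsplit : (∫ ρ in r..r₀, g ρ) + (∫ ρ in r₀..(ε / 2), g ρ) = ∫ ρ in r..(ε / 2), g ρ :=
      intervalIntegral.integral_add_adjacent_intervals h1 h2
    rw [hF r, hF r₀, ← hsplit, mul_add, Real.exp_add, mul_comm (Real.exp (-β * ∫ ρ in r..r₀, g ρ))]
    gcongr
    have hle : ∀ ρ ∈ Icc r r₀, c * ρ ^ (1 - k) ≤ g ρ := by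
      intro ρ hρ
      have hρ0 : 0 < ρ := lt_of_lt_of_le hr0 hρ.1
      have hfl := hlower ρ ⟨hρ0, hρ.2⟩
      have hrp : (η / 2 * ρ ^ (-γ)) ^ (1 - m) ≤ f ρ ^ (1 - m) :=
        Real.rpow_le_rpow (by positivity) hfl hm'.le
      have heq : (η / 2 * ρ ^ (-γ)) ^ (1 - m) = c * ρ ^ (-k) := by
        rw [Real.mul_rpow (by linarith : (0:ℝ) ≤ η/2) (Real.rpow_nonneg hρ0.le _),
          ← Real.rpow_mul hρ0.le, show -γ * (1 - m) = -k by rw [hkdef]; ring]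
      calc c * ρ ^ (1 - k) = ρ * (c * ρ ^ (-k)) := by
            rw [show (1:ℝ) - k = 1 + -k by ring, Real.rpow_add hρ0, Real.rpow_one]; ring
        _ ≤ ρ * f ρ ^ (1 - m) := mul_le_mul_of_nonneg_left (heq ▸ hrp) hρ0.le
    have hcalc : (∫ ρ in r..r₀, c * ρ ^ (1 - k)) = c * (r ^ (2 - k) - r₀ ^ (2 - k)) / (k - 2) := by
      rw [intervalIntegral.integral_const_mul, integral_rpow
        (Or.inr ⟨by intro h; linarith, by
          rw [Set.uIcc_of_le hrr₀.le]; intro h; exact absurd h.1 (by linarith)⟩)]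
      rw [show (1:ℝ) - k + 1 = 2 - k by ring]
      have hne1 : k - 2 ≠ 0 := by linarith
      have hne2 : (2:ℝ) - k ≠ 0 := by linarith
      have hgen : ∀ X Y : ℝ, c * ((Y - X) / (2 - k)) = c * (X - Y) / (k - 2) := by
        intro X Y; field_simp; ring
      exact hgen _ _
    have hint1 : IntervalIntegrable (fun ρ => c * ρ ^ (1 - k)) MeasureTheory.volume r r₀ := by
      apply ContinuousOn.intervalIntegrable
      apply continuousOn_const.mul
      apply ContinuousOn.rpow_const continuous_id.continuousOn
      intro x hx
      rw [uIcc_of_le hrr₀.le] at hx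
      exact Or.inl (by simp only [id]; intro h; rw [h] at hx; exact absurd hx.1 (by linarith))
    have hmono := intervalIntegral.integral_mono_on hrr₀.le hint1 h1 hle
    rw [hcalc] at hmono
    rw [habs]
    calc c * (-β) * (r ^ (2 - k) - r₀ ^ (2 - k)) / (k - 2)
        = (-β) * (c * (r ^ (2 - k) - r₀ ^ (2 - k)) / (k - 2)) := by ring
      _ ≤ (-β) * ∫ ρ in r..r₀, g ρ := by
          exact mul_le_mul_of_nonneg_left hmono hβ0.le
  refine ⟨key, ?_⟩
  set A : ℝ := c * |β| / (k - 2) with hAdef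
  have hA0 : 0 < A := div_pos (mul_pos hc0 (abs_pos.mpr hβ.ne)) (by linarith)
  set C : ℝ := F r₀ * Real.exp (-(A * r₀ ^ (2 - k))) with hCdef
  have hC0 : 0 < C := mul_pos (by rw [hF r₀]; exact Real.exp_pos _) (Real.exp_pos _)
  obtain ⟨N, hN⟩ := exists_nat_gt (((n : ℝ) - 2) / (k - 2))
  rw [div_lt_iff₀ (by linarith : (0:ℝ) < k - 2)] at hN
  set p : ℝ := (n : ℝ) - 2 - N * (k - 2) with hpdef
  have hp0 : p < 0 := by rw [hpdef]; linarith
  have hkne : k - 2 ≠ 0 := by linarith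
  have hE : ∀ X Y : ℝ, c * |β| * (X - Y) / (k - 2) = -(A * Y) + A * X := by
    intro X Y; rw [hAdef]; field_simp; ring
  have hev : ∀ᶠ r in nhdsWithin (0:ℝ) (Ioi 0),
      C * (A ^ N / (N.factorial : ℝ)) * r ^ p ≤ r ^ ((n : ℝ) - 2) * F r := by
    filter_upwards [Ioo_mem_nhdsGT_of_mem ⟨le_refl (0:ℝ), hr₀0⟩] with r hr
    obtain ⟨hr0, hrr₀⟩ := hr
    have h1 := key r ⟨hr0, hrr₀⟩
    have hFr : C * Real.exp (A * r ^ (2 - k)) ≤ F r := by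
      refine le_trans (le_of_eq ?_) h1
      rw [hCdef, mul_assoc, ← Real.exp_add, hE]
    have hpow : (A * r ^ (2 - k)) ^ N = A ^ N * r ^ ((2 - k) * (N : ℝ)) := by
      rw [mul_pow, ← Real.rpow_natCast (r ^ (2 - k)) N, ← Real.rpow_mul hr0.le]
    have hrp : r ^ p = r ^ ((n : ℝ) - 2) * r ^ ((2 - k) * (N : ℝ)) := by
      rw [show p = ((n : ℝ) - 2) + (2 - k) * (N : ℝ) from by rw [hpdef]; ring,
        Real.rpow_add hr0]
    calc C * (A ^ N / (N.factorial : ℝ)) * r ^ p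
        = r ^ ((n : ℝ) - 2) * (C * ((A ^ N * r ^ ((2 - k) * (N : ℝ))) / (N.factorial : ℝ))) := by
          rw [hrp]; ring
      _ = r ^ ((n : ℝ) - 2) * (C * ((A * r ^ (2 - k)) ^ N / (N.factorial : ℝ))) := by
          rw [hpow]
      _ ≤ r ^ ((n : ℝ) - 2) * (C * Real.exp (A * r ^ (2 - k))) := by
          gcongr
          exact Real.pow_div_factorial_le_exp (x := A * r ^ (2 - k)) (by positivity) N
      _ ≤ r ^ ((n : ℝ) - 2) * F r := by
          gcongr
  have htend : Tendsto (fun r : ℝ => C * (A ^ N / (N.factorial : ℝ)) * r ^ p)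
      (nhdsWithin (0:ℝ) (Ioi 0)) atTop := by
    apply Tendsto.const_mul_atTop (by positivity : (0:ℝ) < C * (A ^ N / (N.factorial : ℝ)))
    have h1 : Tendsto (fun s : ℝ => s ^ (-p)) atTop atTop :=
      tendsto_rpow_atTop (by linarith)
    have h2 := h1.comp tendsto_inv_nhdsGT_zero
    apply h2.congr'
    filter_upwards [self_mem_nhdsWithin] with x hx
    have hx0 : (0:ℝ) < x := hx
    simp only [Function.comp]
    rw [Real.inv_rpow hx0.le, Real.rpow_neg hx0.le, inv_inv]
  exact tendsto_atTop_mono' _ hev htend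
end
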